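/- arXiv:2304.00395 — 8 statements merged into one kernel-verified Lean document; each statement's English description precedes it below -/
import Mathlib

section
/- Equality case of the decomposition (Corollary): Suppose Assumption 1 holds and Assumption 2(A,B) holds for parameters δ, K, M_1,…,M_K. Assume additionally that M_1,…,M_K are pairwise disjoint, that w(x,x') = 0 for every (x,x') ∈ M_i × M_j whenever i ≠ j, and that sim(x,x';λ) = δ for all x,x' ∈ M_i, for every i. Then for every measurable encoder f : X → S^{d−1}, L_KCL(f;λ) = (δ/2)·𝔞(f) + λ·𝔠(f) − R(λ). -/
open MeasureTheory
open scoped RealInnerProductSpace ENNReal NNReal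

noncomputable section

namespace KCLStatement1

variable {X : Type*} [MeasurableSpace X]

/-- The marginal density `w(x) := ∫ w(x,x') dν(x')`. -/
def marg (ν : Measure X) (w : X → X → ℝ) (x : X) : ℝ := ∫ x', w x x' ∂ν

/-- The similarity function `sim(x,x';λ) := w(x,x')/(w(x)w(x')) − λ`. -/
def simFun (ν : Measure X) (w : X → X → ℝ) (lam : ℝ) (x x' : X) : ℝ :=
  w x x' / (marg ν w x * marg ν w x') - lam

variable {E : Type*} [NormedAddCommGroup E] [InnerProductSpace ℝ E]

/-- The kernel contrastive loss
`L_KCL(f;λ) = −∫∫ k(f x, f x') w(x,x') + λ ∫∫ k(f x, f x') w(x)w(x')`,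
where `k(z,z') = ⟪h z, h z'⟫`. -/
def Lkcl {d : ℕ} (ν : Measure X) (w : X → X → ℝ) (h : EuclideanSpace ℝ (Fin d) → E)
    (f : X → EuclideanSpace ℝ (Fin d)) (lam : ℝ) : ℝ :=
  -(∫ x, ∫ x', (⟪h (f x), h (f x')⟫ : ℝ) * w x x' ∂ν ∂ν)
    + lam * ∫ x, ∫ x', (⟪h (f x), h (f x')⟫ : ℝ) * (marg ν w x * marg ν w x') ∂ν ∂ν

/-- The alignment quantity
`𝔞(f) = Σᵢ ∫∫_{Mᵢ×Mᵢ} ‖h(f x) − h(f x')‖² w(x)w(x')`. -/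
def aQuant {d K : ℕ} (ν : Measure X) (w : X → X → ℝ) (h : EuclideanSpace ℝ (Fin d) → E)
    (f : X → EuclideanSpace ℝ (Fin d)) (M : Fin K → Set X) : ℝ :=
  ∑ i, ∫ x in M i, ∫ x' in M i, ‖h (f x) - h (f x')‖ ^ 2 * (marg ν w x * marg ν w x') ∂ν ∂ν

/-- The (unnormalized) cluster mean `∫_{Mᵢ} h(f x) w(x) dν(x)` as a Bochner integral. -/
def clusterInt [CompleteSpace E] {d K : ℕ} (ν : Measure X) (w : X → X → ℝ)
    (h : EuclideanSpace ℝ (Fin d) → E) (f : X → EuclideanSpace ℝ (Fin d))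
    (M : Fin K → Set X) (i : Fin K) : E :=
  ∫ x in M i, marg ν w x • h (f x) ∂ν

/-- The divergence quantity `𝔠(f) = Σ_{i≠j} ⟪∫_{Mᵢ} h(f x) w(x), ∫_{Mⱼ} h(f x') w(x')⟫`. -/
def cQuant [CompleteSpace E] {d K : ℕ} (ν : Measure X) (w : X → X → ℝ)
    (h : EuclideanSpace ℝ (Fin d) → E) (f : X → EuclideanSpace ℝ (Fin d))
    (M : Fin K → Set X) : ℝ :=
  ∑ i, ∑ j, if i = j then 0 else
    (⟪clusterInt ν w h f M i, clusterInt ν w h f M j⟫ : ℝ)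

/-- `P_X(Mᵢ) = ∫_{Mᵢ} w(x) dν(x)`. -/
def PXv (ν : Measure X) (w : X → X → ℝ) {K : ℕ} (M : Fin K → Set X) (i : Fin K) : ℝ :=
  ∫ x in M i, marg ν w x ∂ν

/-- `M_k := sup_{z,z' ∈ S^{d−1}} ‖h(z) − h(z')‖²`. -/
def Mk {d : ℕ} (h : EuclideanSpace ℝ (Fin d) → E) : ℝ :=
  ⨆ p : {z : EuclideanSpace ℝ (Fin d) // ‖z‖ = 1} ×
      {z : EuclideanSpace ℝ (Fin d) // ‖z‖ = 1}, ‖h p.1.1 - h p.2.1‖ ^ 2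

/-- `R(λ) := (M_k/2) Σ_{i≠j} P₊((Mᵢ∩Mⱼ)×(Mᵢ∩Mⱼ)) + λψ(1) Σᵢ P_X(Mᵢ)(1−P_X(Mᵢ)) + (1−λ)ψ(1)`. -/
def Rconst {d K : ℕ} (ν : Measure X) (w : X → X → ℝ) (h : EuclideanSpace ℝ (Fin d) → E)
    (M : Fin K → Set X) (ψ1 lam : ℝ) : ℝ :=
  Mk h / 2 * ∑ i, ∑ j, (if i = j then 0 else
      ∫ x in M i ∩ M j, ∫ x' in M i ∩ M j, w x x' ∂ν ∂ν)
    + lam * ψ1 * ∑ i, PXv ν w M i * (1 - PXv ν w M i)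
    + (1 - lam) * ψ1

lemma sum_setIntegral_partition {α : Type*} [MeasurableSpace α] (μ : Measure α) {K : ℕ}
    (M : Fin K → Set α) (hm : ∀ i, MeasurableSet (M i)) (hcover : (⋃ i, M i) = Set.univ)
    (hdisj : Pairwise (Function.onFun Disjoint M)) {F : α → ℝ} (hF : Integrable F μ) :
    ∫ x, F x ∂μ = ∑ i, ∫ x in M i, F x ∂μ := by
  rw [← setIntegral_univ, ← hcover, integral_iUnion hm hdisj hF.integrableOn, tsum_fintype]

lemma double_integral_partition {α : Type*} [MeasurableSpace α] (μ : Measure α) [SigmaFinite μ]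
    {K : ℕ} (M : Fin K → Set α) (hm : ∀ i, MeasurableSet (M i))
    (hcover : (⋃ i, M i) = Set.univ) (hdisj : Pairwise (Function.onFun Disjoint M))
    {F : α × α → ℝ} (hF : Integrable F (μ.prod μ)) :
    ∫ p, F p ∂(μ.prod μ) = ∑ i, ∑ j, ∫ x in M i, ∫ y in M j, F (x, y) ∂μ ∂μ := by
  have hun : (⋃ p : Fin K × Fin K, M p.1 ×ˢ M p.2) = Set.univ := by
    ext z
    simp only [Set.mem_iUnion, Set.mem_prod, Set.mem_univ, iff_true]
    obtain ⟨i, hi⟩ := Set.iUnion_eq_univ_iff.mp hcover z.1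
    obtain ⟨j, hj⟩ := Set.iUnion_eq_univ_iff.mp hcover z.2
    exact ⟨(i, j), hi, hj⟩
  have hd : Pairwise (Function.onFun Disjoint fun p : Fin K × Fin K => M p.1 ×ˢ M p.2) := by
    intro p q hpq
    have hor : p.1 ≠ q.1 ∨ p.2 ≠ q.2 := by
      by_contra hc
      push_neg at hc
      exact hpq (Prod.ext hc.1 hc.2)
    exact Set.disjoint_prod.mpr (hor.imp (fun h => hdisj h) (fun h => hdisj h))
  have hms : ∀ p : Fin K × Fin K, MeasurableSet (M p.1 ×ˢ M p.2) := fun p =>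
    (hm p.1).prod (hm p.2)
  calc ∫ p, F p ∂(μ.prod μ)
      = ∫ p in ⋃ q : Fin K × Fin K, M q.1 ×ˢ M q.2, F p ∂(μ.prod μ) := by
        rw [hun, setIntegral_univ]
    _ = ∑' q : Fin K × Fin K, ∫ p in M q.1 ×ˢ M q.2, F p ∂(μ.prod μ) :=
        integral_iUnion hms hd hF.integrableOn
    _ = ∑ q : Fin K × Fin K, ∫ p in M q.1 ×ˢ M q.2, F p ∂(μ.prod μ) := tsum_fintype _
    _ = ∑ i, ∑ j, ∫ p in M i ×ˢ M j, F p ∂(μ.prod μ) := Fintype.sum_prod_type _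
    _ = ∑ i, ∑ j, ∫ x in M i, ∫ y in M j, F (x, y) ∂μ ∂μ := by
        refine Finset.sum_congr rfl fun i _ => Finset.sum_congr rfl fun j _ => ?_
        rw [← Measure.prod_restrict]
        exact integral_prod F (by rw [Measure.prod_restrict]; exact hF.integrableOn)

/-- **Equality case of the decomposition (Corollary 5.2).**  Under Assumption 1 and Assumption
2(A,B), if moreover the clusters `M₁,…,M_K` are pairwise disjoint, `w(x,x') = 0` across
distinct clusters, and `sim(x,x';λ) = δ` within each cluster, then for every measurable
encoder `f : X → S^{d−1}` one has `L_KCL(f;λ) = (δ/2)·𝔞(f) + λ·𝔠(f) − R(λ)`. -/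
theorem kcl_decomposition_equality
    {X : Type*} [MeasurableSpace X]
    {E : Type*} [NormedAddCommGroup E] [InnerProductSpace ℝ E] [CompleteSpace E]
    {d : ℕ} (hd : 0 < d)
    (ν : Measure X) [SigmaFinite ν]
    (w : X → X → ℝ)
    (hwmeas : Measurable (Function.uncurry w))
    (hwnn : ∀ x x', 0 ≤ w x x')
    (hwint : Integrable (fun p : X × X => w p.1 p.2) (ν.prod ν))
    (hwone : ∫ p, w p.1 p.2 ∂(ν.prod ν) = 1)
    (hmint : Integrable (marg ν w) ν)
    (hmpos : ∀ x, 0 < marg ν w x)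
    -- Assumption 1 on the kernel `k(z,z') = ⟪h z, h z'⟫`
    (h : EuclideanSpace ℝ (Fin d) → E) (hcont : Continuous h)
    (ψ : ℝ → ℝ) (ρ : ℝ≥0) (hψlip : LipschitzOnWith ρ ψ (Set.Icc (-1 : ℝ) 1))
    (hker : ∀ z z' : EuclideanSpace ℝ (Fin d), ‖z‖ = 1 → ‖z'‖ = 1 →
      (⟪h z, h z'⟫ : ℝ) = ψ (⟪z, z'⟫ : ℝ))
    (lam : ℝ) (hlam : 0 ≤ lam)
    -- Assumption 2(A,B)
    (K : ℕ) (hK : 0 < K) (δ : ℝ)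
    (M : Fin K → Set X) (hMmeas : ∀ i, MeasurableSet (M i))
    (hcover : (⋃ i, M i) = Set.univ)
    (hsim : ∀ i : Fin K, ∀ x ∈ M i, ∀ x' ∈ M i, δ ≤ simFun ν w lam x x')
    -- additional assumptions of the equality case
    (hdisj : Pairwise (Function.onFun Disjoint M))
    (hcross : ∀ i j : Fin K, i ≠ j → ∀ x ∈ M i, ∀ x' ∈ M j, w x x' = 0)
    (hsimeq : ∀ i : Fin K, ∀ x ∈ M i, ∀ x' ∈ M i, simFun ν w lam x x' = δ)
    -- the encoder
    (f : X → EuclideanSpace ℝ (Fin d)) (hf : Measurable f) (hfs : ∀ x, ‖f x‖ = 1) :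
    Lkcl ν w h f lam =
      δ / 2 * aQuant ν w h f M + lam * cQuant ν w h f M - Rconst ν w h M (ψ 1) lam := by
  classical
  -- nonemptiness of X
  have hXne : Nonempty X := by
    by_contra hne
    have : IsEmpty X := not_nonempty_iff.mp hne
    have : IsEmpty (X × X) := inferInstance
    rw [integral_of_isEmpty] at hwone
    norm_num at hwone
  -- pointwise kernel facts
  have hgg : ∀ x : X, (⟪h (f x), h (f x)⟫ : ℝ) = ψ 1 := by
    intro x
    rw [hker _ _ (hfs x) (hfs x)]
    congr 1
    rw [real_inner_self_eq_norm_sq, hfs x, one_pow]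
  have hnormg : ∀ x : X, ‖h (f x)‖ ^ 2 = ψ 1 := by
    intro x; rw [← real_inner_self_eq_norm_sq]; exact hgg x
  have hψ1 : 0 ≤ ψ 1 := by
    obtain ⟨x⟩ := hXne
    rw [← hnormg x]; positivity
  have hbnd : ∀ x y : X, |(⟪h (f x), h (f y)⟫ : ℝ)| ≤ ψ 1 := by
    intro x y
    have h1 := abs_real_inner_le_norm (h (f x)) (h (f y))
    nlinarith [hnormg x, hnormg y, norm_nonneg (h (f x)), norm_nonneg (h (f y))]
  -- measurability
  have hgsm : StronglyMeasurable (fun x => h (f x)) :=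
    hcont.comp_stronglyMeasurable hf.stronglyMeasurable
  have hinn_sm : StronglyMeasurable (fun p : X × X => (⟪h (f p.1), h (f p.2)⟫ : ℝ)) := by
    have hc : Continuous fun q : E × E => (⟪q.1, q.2⟫ : ℝ) := continuous_inner
    exact hc.comp_stronglyMeasurable
      ((hgsm.comp_measurable measurable_fst).prodMk (hgsm.comp_measurable measurable_snd))
  have hmsm : StronglyMeasurable (marg ν w) :=
    hwmeas.stronglyMeasurable.integral_prod_right'
  -- integrability
  have hgmint : Integrable (fun x => marg ν w x • h (f x)) ν := by
    have hB : ∀ x : X, ‖h (f x)‖ = Real.sqrt (ψ 1) := by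
      intro x; rw [← hnormg x, Real.sqrt_sq (norm_nonneg _)]
    refine Integrable.mono' (hmint.norm.mul_const (Real.sqrt (ψ 1)))
      (hmsm.aestronglyMeasurable.smul hgsm.aestronglyMeasurable)
      (Filter.Eventually.of_forall fun x => ?_)
    rw [norm_smul, hB x]
  have hWg : Integrable (fun p : X × X => (⟪h (f p.1), h (f p.2)⟫ : ℝ) * w p.1 p.2)
      (ν.prod ν) := by
    refine Integrable.mono' (hwint.const_mul (ψ 1))
      (hinn_sm.aestronglyMeasurable.mul hwmeas.aestronglyMeasurable)
      (Filter.Eventually.of_forall fun p => ?_)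
    rw [Real.norm_eq_abs, abs_mul, abs_of_nonneg (hwnn p.1 p.2)]
    exact mul_le_mul_of_nonneg_right (hbnd p.1 p.2) (hwnn p.1 p.2)
  have hmm2 : Integrable (fun p : X × X => marg ν w p.1 * marg ν w p.2) (ν.prod ν) :=
    hmint.mul_prod hmint
  have hWm : Integrable
      (fun p : X × X => (⟪h (f p.1), h (f p.2)⟫ : ℝ) * (marg ν w p.1 * marg ν w p.2))
      (ν.prod ν) := by
    refine Integrable.mono' (hmm2.const_mul (ψ 1))
      (hinn_sm.aestronglyMeasurable.mul hmm2.aestronglyMeasurable)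
      (Filter.Eventually.of_forall fun p => ?_)
    have hmn : 0 ≤ marg ν w p.1 * marg ν w p.2 :=
      mul_nonneg (hmpos p.1).le (hmpos p.2).le
    rw [Real.norm_eq_abs, abs_mul, abs_of_nonneg hmn]
    exact mul_le_mul_of_nonneg_right (hbnd p.1 p.2) hmn
  -- inner-product extraction
  have hIP : ∀ i j : Fin K,
      (∫ x in M i, ∫ y in M j, (⟪h (f x), h (f y)⟫ : ℝ) * (marg ν w x * marg ν w y) ∂ν ∂ν)
        = ⟪clusterInt ν w h f M i, clusterInt ν w h f M j⟫ := by
    intro i j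
    have h1 : ∀ x : X,
        (∫ y in M j, (⟪h (f x), h (f y)⟫ : ℝ) * (marg ν w x * marg ν w y) ∂ν)
          = ⟪marg ν w x • h (f x), clusterInt ν w h f M j⟫ := by
      intro x
      have e : (fun y => (⟪h (f x), h (f y)⟫ : ℝ) * (marg ν w x * marg ν w y))
          = fun y => (⟪marg ν w x • h (f x), marg ν w y • h (f y)⟫ : ℝ) := by
        funext y
        rw [real_inner_smul_left, real_inner_smul_right]; ring
      rw [e]
      exact integral_inner hgmint.integrableOn _
    simp only [h1]
    have h2 : ∀ x : X, (⟪marg ν w x • h (f x), clusterInt ν w h f M j⟫ : ℝ)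
        = ⟪clusterInt ν w h f M j, marg ν w x • h (f x)⟫ := fun x => real_inner_comm _ _
    simp only [h2]
    rw [integral_inner hgmint.integrableOn]
    exact real_inner_comm _ _
  -- product of marginals
  have hPP : ∀ i j : Fin K,
      (∫ x in M i, ∫ y in M j, marg ν w x * marg ν w y ∂ν ∂ν) = PXv ν w M i * PXv ν w M j := by
    intro i j
    have h1 : ∀ x : X, (∫ y in M j, marg ν w x * marg ν w y ∂ν) = marg ν w x * PXv ν w M j :=
      fun x => integral_const_mul _ _
    simp only [h1]
    exact integral_mul_const _ _
  -- within-cluster formula for w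
  have hwdiag : ∀ i : Fin K, ∀ x ∈ M i, ∀ y ∈ M i,
      w x y = (δ + lam) * (marg ν w x * marg ν w y) := by
    intro i x hx y hy
    have hs := hsimeq i x hx y hy
    unfold simFun at hs
    have hne : marg ν w x * marg ν w y ≠ 0 := (mul_pos (hmpos x) (hmpos y)).ne'
    have hdiv : w x y / (marg ν w x * marg ν w y) = δ + lam := by linarith
    rw [div_eq_iff hne] at hdiv
    exact hdiv
  -- diagonal/cross double integrals of b * w
  have hWij : ∀ i j : Fin K,
      (∫ x in M i, ∫ y in M j, (⟪h (f x), h (f y)⟫ : ℝ) * w x y ∂ν ∂ν)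
        = if i = j then (δ + lam) * ⟪clusterInt ν w h f M i, clusterInt ν w h f M i⟫
          else 0 := by
    intro i j
    by_cases hij : i = j
    · subst hij
      have e : (∫ x in M i, ∫ y in M i, (⟪h (f x), h (f y)⟫ : ℝ) * w x y ∂ν ∂ν)
          = ∫ x in M i, ∫ y in M i,
              (δ + lam) * ((⟪h (f x), h (f y)⟫ : ℝ) * (marg ν w x * marg ν w y)) ∂ν ∂ν := by
        refine setIntegral_congr_fun (hMmeas i) fun x hx => ?_
        refine setIntegral_congr_fun (hMmeas i) fun y hy => ?_
        rw [hwdiag i x hx y hy]; ring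
      rw [e]
      simp only [integral_const_mul]
      rw [hIP i i]
      simp only [eq_self_iff_true, if_true]
    · simp only [if_neg hij]
      have h0 : ∀ x ∈ M i,
          (∫ y in M j, (⟪h (f x), h (f y)⟫ : ℝ) * w x y ∂ν) = 0 := by
        intro x hx
        rw [setIntegral_congr_fun (hMmeas j)
          (fun y hy => by rw [hcross i j hij x hx y hy, mul_zero])]
        simp
      rw [setIntegral_congr_fun (hMmeas i) (fun x hx => h0 x hx)]
      simp
  have hWij' : ∀ i j : Fin K,
      (∫ x in M i, ∫ y in M j, w x y ∂ν ∂ν)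
        = if i = j then (δ + lam) * (PXv ν w M i * PXv ν w M i) else 0 := by
    intro i j
    by_cases hij : i = j
    · subst hij
      have e : (∫ x in M i, ∫ y in M i, w x y ∂ν ∂ν)
          = ∫ x in M i, ∫ y in M i, (δ + lam) * (marg ν w x * marg ν w y) ∂ν ∂ν := by
        refine setIntegral_congr_fun (hMmeas i) fun x hx => ?_
        refine setIntegral_congr_fun (hMmeas i) fun y hy => ?_
        rw [hwdiag i x hx y hy]
      rw [e]
      simp only [eq_self_iff_true, if_true]
      have e2 : (∫ x in M i, ∫ y in M i, (δ + lam) * (marg ν w x * marg ν w y) ∂ν ∂ν)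
          = (δ + lam) * ∫ x in M i, ∫ y in M i, marg ν w x * marg ν w y ∂ν ∂ν := by
        rw [← integral_const_mul]
        refine setIntegral_congr_fun (hMmeas i) fun x hx => ?_
        rw [integral_const_mul]
      rw [e2, hPP i i]
    · simp only [if_neg hij]
      have h0 : ∀ x ∈ M i, (∫ y in M j, w x y ∂ν) = 0 := by
        intro x hx
        rw [setIntegral_congr_fun (hMmeas j)
          (fun y hy => hcross i j hij x hx y hy)]
        simp
      rw [setIntegral_congr_fun (hMmeas i) (fun x hx => h0 x hx)]
      simp
  -- the two normalization identities
  have hT : (∑ i, PXv ν w M i) = 1 := by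
    have h1 : ∫ x, marg ν w x ∂ν = 1 := by
      have h2 := integral_integral (μ := ν) (ν := ν) (f := w) hwint
      rw [hwone] at h2
      exact h2
    rw [← h1]
    exact (sum_setIntegral_partition ν M hMmeas hcover hdisj hmint).symm
  have hQ : (δ + lam) * (∑ i, PXv ν w M i * PXv ν w M i) = 1 := by
    have h1 := double_integral_partition ν M hMmeas hcover hdisj hwint
    rw [hwone] at h1
    simp only [hWij', Finset.sum_ite_eq, Finset.mem_univ, if_true] at h1
    rw [← Finset.mul_sum] at h1
    linarith
  -- main term computations
  have hI1 : (∫ x, ∫ y, (⟪h (f x), h (f y)⟫ : ℝ) * w x y ∂ν ∂ν)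
      = (δ + lam) * ∑ i, (⟪clusterInt ν w h f M i, clusterInt ν w h f M i⟫ : ℝ) := by
    rw [integral_integral (f := fun x y => (⟪h (f x), h (f y)⟫ : ℝ) * w x y) hWg,
      double_integral_partition ν M hMmeas hcover hdisj hWg]
    simp only [hWij, Finset.sum_ite_eq, Finset.mem_univ, if_true]
    rw [← Finset.mul_sum]
  have hI2 : (∫ x, ∫ y, (⟪h (f x), h (f y)⟫ : ℝ) * (marg ν w x * marg ν w y) ∂ν ∂ν)
      = (∑ i, (⟪clusterInt ν w h f M i, clusterInt ν w h f M i⟫ : ℝ))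
        + cQuant ν w h f M := by
    rw [integral_integral
        (f := fun x y => (⟪h (f x), h (f y)⟫ : ℝ) * (marg ν w x * marg ν w y)) hWm,
      double_integral_partition ν M hMmeas hcover hdisj hWm]
    simp only [hIP]
    unfold cQuant
    rw [← Finset.sum_add_distrib]
    refine Finset.sum_congr rfl fun i _ => ?_
    calc (∑ j, (⟪clusterInt ν w h f M i, clusterInt ν w h f M j⟫ : ℝ))
        = ∑ j, ((if i = j then (⟪clusterInt ν w h f M i, clusterInt ν w h f M j⟫ : ℝ) else 0)
            + (if i = j then 0 else (⟪clusterInt ν w h f M i, clusterInt ν w h f M j⟫ : ℝ))) :=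
          Finset.sum_congr rfl fun j _ => by by_cases hij : i = j <;> simp [hij]
      _ = _ := by
          rw [Finset.sum_add_distrib]
          simp [Finset.sum_ite_eq]
  -- alignment computation
  have haQ : aQuant ν w h f M
      = ∑ i, (2 * ψ 1 * (PXv ν w M i * PXv ν w M i)
          - 2 * (⟪clusterInt ν w h f M i, clusterInt ν w h f M i⟫ : ℝ)) := by
    unfold aQuant
    refine Finset.sum_congr rfl fun i _ => ?_
    set F : X × X → ℝ := fun p =>
      ‖h (f p.1) - h (f p.2)‖ ^ 2 * (marg ν w p.1 * marg ν w p.2) with hFdef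
    have hptw : ∀ p : X × X, F p
        = 2 * ψ 1 * (marg ν w p.1 * marg ν w p.2)
          - 2 * ((⟪h (f p.1), h (f p.2)⟫ : ℝ) * (marg ν w p.1 * marg ν w p.2)) := by
      intro p
      have hns := norm_sub_sq_real (h (f p.1)) (h (f p.2))
      simp only [hFdef]
      rw [hns, hnormg p.1, hnormg p.2]; ring
    have hFint : Integrable F (ν.prod ν) := by
      refine Integrable.congr ((hmm2.const_mul (2 * ψ 1)).sub (hWm.const_mul 2)) ?_
      exact Filter.Eventually.of_forall fun p => (hptw p).symm
    have hFR : Integrable F ((ν.restrict (M i)).prod (ν.restrict (M i))) := by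
      rw [Measure.prod_restrict]
      exact hFint.integrableOn
    have hconv : (∫ x in M i, ∫ y in M i, F (x, y) ∂ν ∂ν)
        = ∫ p, F p ∂((ν.restrict (M i)).prod (ν.restrict (M i))) :=
      (integral_prod F hFR).symm
    have hGR : Integrable (fun p : X × X => marg ν w p.1 * marg ν w p.2)
        ((ν.restrict (M i)).prod (ν.restrict (M i))) := by
      rw [Measure.prod_restrict]; exact hmm2.integrableOn
    have hHR : Integrable
        (fun p : X × X => (⟪h (f p.1), h (f p.2)⟫ : ℝ) * (marg ν w p.1 * marg ν w p.2))
        ((ν.restrict (M i)).prod (ν.restrict (M i))) := by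
      rw [Measure.prod_restrict]; exact hWm.integrableOn
    calc (∫ x in M i, ∫ y in M i,
            ‖h (f x) - h (f y)‖ ^ 2 * (marg ν w x * marg ν w y) ∂ν ∂ν)
        = ∫ p, F p ∂((ν.restrict (M i)).prod (ν.restrict (M i))) := hconv
      _ = ∫ p, (2 * ψ 1 * (marg ν w p.1 * marg ν w p.2)
            - 2 * ((⟪h (f p.1), h (f p.2)⟫ : ℝ) * (marg ν w p.1 * marg ν w p.2)))
            ∂((ν.restrict (M i)).prod (ν.restrict (M i))) := by
          exact integral_congr_ae (Filter.Eventually.of_forall fun p => hptw p)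
      _ = 2 * ψ 1 * (∫ p, (marg ν w p.1 * marg ν w p.2)
              ∂((ν.restrict (M i)).prod (ν.restrict (M i))))
          - 2 * ∫ p, ((⟪h (f p.1), h (f p.2)⟫ : ℝ) * (marg ν w p.1 * marg ν w p.2))
              ∂((ν.restrict (M i)).prod (ν.restrict (M i))) := by
          rw [integral_sub (hGR.const_mul (2 * ψ 1)) (hHR.const_mul 2),
            integral_const_mul, integral_const_mul]
      _ = 2 * ψ 1 * (PXv ν w M i * PXv ν w M i)
          - 2 * (⟪clusterInt ν w h f M i, clusterInt ν w h f M i⟫ : ℝ) := by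
          rw [integral_prod _ hGR, integral_prod _ hHR, hPP i i, hIP i i]
  -- R constant simplification
  have hR : Rconst ν w h M (ψ 1) lam
      = lam * ψ 1 * ((∑ i, PXv ν w M i) - ∑ i, PXv ν w M i * PXv ν w M i)
        + (1 - lam) * ψ 1 := by
    unfold Rconst
    have hz : ∀ i j : Fin K,
        (if i = j then 0 else ∫ x in M i ∩ M j, ∫ x' in M i ∩ M j, w x x' ∂ν ∂ν)
          = (0 : ℝ) := by
      intro i j
      by_cases hij : i = j
      · simp [hij]
      · have hempty : M i ∩ M j = ∅ := Set.disjoint_iff_inter_eq_empty.mp (hdisj hij)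
        simp [hij, hempty]
    simp only [hz, Finset.sum_const_zero, mul_zero, zero_add]
    have hsum : (∑ i, PXv ν w M i * (1 - PXv ν w M i))
        = (∑ i, PXv ν w M i) - ∑ i, PXv ν w M i * PXv ν w M i := by
      rw [← Finset.sum_sub_distrib]
      exact Finset.sum_congr rfl fun i _ => by ring
    rw [hsum]
  -- final assembly
  rw [Lkcl, hI1, hI2, haQ, hR]
  rw [Finset.sum_sub_distrib, ← Finset.mul_sum, ← Finset.mul_sum]
  set S := ∑ i, (⟪clusterInt ν w h f M i, clusterInt ν w h f M i⟫ : ℝ)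
  set Q := ∑ i, PXv ν w M i * PXv ν w M i
  set T := ∑ i, PXv ν w M i
  set C := cQuant ν w h f M
  linear_combination (-(ψ 1)) * hQ + (lam * ψ 1) * hT


end KCLStatement1
end
end

section
/- Downstream classification error bound (Theorem 5.2 / Theorem C.1): Suppose Assumption 1 holds and Assumption 2(A,B) holds for δ, K, M_1,…,M_K with P_X(M_i) > 0 for every i. Let y : X → {1,…,K} be measurable with {x : y(x) = i} ⊆ M_i for every i (Assumption 2(C)), and suppose f : X → S^{d−1} is a meaningful measurable encoder, i.e. Δ_min(f) := min_{i≠j} ‖μ_i(f) − μ_j(f)‖²_E > 0. Then P_X({x ∈ X : ∃ j ≠ y(x) with ‖h(f(x)) − μ_{y(x)}(f)‖_E ≥ ‖h(f(x)) − μ_j(f)‖_E}) ≤ 8(K−1)·𝔞(f) / (Δ_min(f) · min_{1≤i≤K} P_X(M_i)). Since this set contains every point misclassified by any nearest-mean classifier g(x) ∈ argmin_i ‖h(f(x)) − μ_i(f)‖_E with ties broken in favor of y(x), the same quantity bounds the downstream classification error L_Err(f, W_μ, β_μ; y). -/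
open MeasureTheory
open scoped RealInnerProductSpace ENNReal NNReal

noncomputable section

namespace KCLStatement2

variable {X : Type*} [MeasurableSpace X]

/-- The marginal density `w(x) := ∫ w(x,x') dν(x')`. -/
def marg (ν : Measure X) (w : X → X → ℝ) (x : X) : ℝ := ∫ x', w x x' ∂ν

/-- The similarity function `sim(x,x';λ) := w(x,x')/(w(x)w(x')) − λ`. -/
def simFun (ν : Measure X) (w : X → X → ℝ) (lam : ℝ) (x x' : X) : ℝ :=
  w x x' / (marg ν w x * marg ν w x') - lam

variable {E : Type*} [NormedAddCommGroup E] [InnerProductSpace ℝ E]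

/-- The kernel contrastive loss
`L_KCL(f;λ) = −∫∫ k(f x, f x') w(x,x') + λ ∫∫ k(f x, f x') w(x)w(x')`,
where `k(z,z') = ⟪h z, h z'⟫`. -/
def Lkcl {d : ℕ} (ν : Measure X) (w : X → X → ℝ) (h : EuclideanSpace ℝ (Fin d) → E)
    (f : X → EuclideanSpace ℝ (Fin d)) (lam : ℝ) : ℝ :=
  -(∫ x, ∫ x', (⟪h (f x), h (f x')⟫ : ℝ) * w x x' ∂ν ∂ν)
    + lam * ∫ x, ∫ x', (⟪h (f x), h (f x')⟫ : ℝ) * (marg ν w x * marg ν w x') ∂ν ∂ν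

/-- The alignment quantity
`𝔞(f) = Σᵢ ∫∫_{Mᵢ×Mᵢ} ‖h(f x) − h(f x')‖² w(x)w(x')`. -/
def aQuant {d K : ℕ} (ν : Measure X) (w : X → X → ℝ) (h : EuclideanSpace ℝ (Fin d) → E)
    (f : X → EuclideanSpace ℝ (Fin d)) (M : Fin K → Set X) : ℝ :=
  ∑ i, ∫ x in M i, ∫ x' in M i, ‖h (f x) - h (f x')‖ ^ 2 * (marg ν w x * marg ν w x') ∂ν ∂ν

/-- The (unnormalized) cluster mean `∫_{Mᵢ} h(f x) w(x) dν(x)` as a Bochner integral. -/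
def clusterInt [CompleteSpace E] {d K : ℕ} (ν : Measure X) (w : X → X → ℝ)
    (h : EuclideanSpace ℝ (Fin d) → E) (f : X → EuclideanSpace ℝ (Fin d))
    (M : Fin K → Set X) (i : Fin K) : E :=
  ∫ x in M i, marg ν w x • h (f x) ∂ν

/-- The divergence quantity `𝔠(f) = Σ_{i≠j} ⟪∫_{Mᵢ} h(f x) w(x), ∫_{Mⱼ} h(f x') w(x')⟫`. -/
def cQuant [CompleteSpace E] {d K : ℕ} (ν : Measure X) (w : X → X → ℝ)
    (h : EuclideanSpace ℝ (Fin d) → E) (f : X → EuclideanSpace ℝ (Fin d))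
    (M : Fin K → Set X) : ℝ :=
  ∑ i, ∑ j, if i = j then 0 else
    (⟪clusterInt ν w h f M i, clusterInt ν w h f M j⟫ : ℝ)

/-- `P_X(Mᵢ) = ∫_{Mᵢ} w(x) dν(x)`. -/
def PXv (ν : Measure X) (w : X → X → ℝ) {K : ℕ} (M : Fin K → Set X) (i : Fin K) : ℝ :=
  ∫ x in M i, marg ν w x ∂ν

/-- The normalized cluster mean `μᵢ(f) := P_X(Mᵢ)⁻¹ ∫_{Mᵢ} h(f x) w(x) dν(x)`. -/
def muF [CompleteSpace E] {d K : ℕ} (ν : Measure X) (w : X → X → ℝ)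
    (h : EuclideanSpace ℝ (Fin d) → E) (f : X → EuclideanSpace ℝ (Fin d))
    (M : Fin K → Set X) (i : Fin K) : E :=
  (PXv ν w M i)⁻¹ • clusterInt ν w h f M i

/-- `Δ_min(f) := min_{i≠j} ‖μᵢ(f) − μⱼ(f)‖²`. -/
def Dmin [CompleteSpace E] {d K : ℕ} (ν : Measure X) (w : X → X → ℝ)
    (h : EuclideanSpace ℝ (Fin d) → E) (f : X → EuclideanSpace ℝ (Fin d))
    (M : Fin K → Set X) : ℝ :=
  ⨅ p : {q : Fin K × Fin K // q.1 ≠ q.2},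
    ‖muF ν w h f M p.1.1 - muF ν w h f M p.1.2‖ ^ 2

end KCLStatement2

/-! If some other mean `μⱼ` is at least as close to `h(f x)` as `μ_{y(x)}`, then
`Δ_min ≤ ‖μⱼ - μ_{y(x)}‖² ≤ 4 ‖h(f x) - μ_{y(x)}‖²`. Markov's inequality therefore bounds the
mass of such points with label `i` by `4/Δ_min` times the `P_X`-weighted variance of `h ∘ f`
around `μᵢ` on `Mᵢ`, and since `‖h‖` is constant that variance equals the `i`-th summand of
`𝔞(f)` divided by `2 P_X(Mᵢ)`. Summing over the labels gives
`2 𝔞(f) / (Δ_min · minᵢ P_X(Mᵢ))`, and `K ≥ 2` because `Δ_min = 0` otherwise. -/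

theorem sq_norm_sub_le_four_mul_sq_norm_sub {F : Type*} [SeminormedAddCommGroup F] {z u v : F}
    (hcloser : ‖z - v‖ ≤ ‖z - u‖) : ‖v - u‖ ^ 2 ≤ 4 * ‖z - u‖ ^ 2 := by
  have hle : ‖v - u‖ ≤ 2 * ‖z - u‖ := by
    calc ‖v - u‖ ≤ ‖v - z‖ + ‖z - u‖ := norm_sub_le_norm_sub_add_norm_sub _ _ _
      _ ≤ 2 * ‖z - u‖ := by rw [norm_sub_rev]; linarith
  nlinarith [norm_nonneg (v - u)]

theorem norm_eq_sqrt_of_inner_eq_comp_inner {E F : Type*} [NormedAddCommGroup E]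
    [InnerProductSpace ℝ E] [NormedAddCommGroup F] [InnerProductSpace ℝ F] {h : F → E} {ψ : ℝ → ℝ}
    (hker : ∀ z z' : F, ‖z‖ = 1 → ‖z'‖ = 1 → ⟪h z, h z'⟫ = ψ ⟪z, z'⟫) {z : F} (hz : ‖z‖ = 1) :
    ‖h z‖ = √(ψ 1) := by
  rw [← Real.sqrt_sq (norm_nonneg _), ← real_inner_self_eq_norm_sq, hker z z hz hz,
    real_inner_self_eq_norm_sq, hz, one_pow]

section

variable {X F : Type*} [MeasurableSpace X] [NormedAddCommGroup F] {μ : Measure X} {m : X → ℝ}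
  {a : X → F} {r : ℝ}

theorem integrable_smul_of_norm_eq [NormedSpace ℝ F] (hm : Integrable m μ)
    (ha : AEStronglyMeasurable a μ) (hr : ∀ x, ‖a x‖ = r) : Integrable (fun x => m x • a x) μ := by
  refine (hm.norm.mul_const r).mono' (hm.aestronglyMeasurable.smul ha) (ae_of_all _ fun x => ?_)
  rw [norm_smul, hr]

theorem integrable_sq_norm_sub_mul (hm : Integrable m μ) (ha : AEStronglyMeasurable a μ)
    (hr : ∀ x, ‖a x‖ = r) (c : F) : Integrable (fun x => ‖a x - c‖ ^ 2 * m x) μ := by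
  refine hm.bdd_mul (c := (r + ‖c‖) ^ 2) ((ha.sub aestronglyMeasurable_const).norm.pow 2)
    (ae_of_all _ fun x => ?_)
  rw [Real.norm_eq_abs, abs_of_nonneg (by positivity), ← hr x]
  exact pow_le_pow_left₀ (norm_nonneg _) (norm_sub_le _ _) 2

/-- Both sides equal `2 r² P² - 2 ‖c‖²` with `P = ∫ m` and `c = ∫ m • a`: after expanding the
squares, every integrand is linear in `m` and `m • a`. -/
theorem integral_integral_sq_norm_sub_mul_eq [InnerProductSpace ℝ F] [CompleteSpace F]
    (hr : ∀ x, ‖a x‖ = r) (hm : Integrable m μ) (hma : Integrable (fun x => m x • a x) μ)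
    (hP : ∫ x, m x ∂μ ≠ 0) :
    ∫ x, ∫ x', ‖a x - a x'‖ ^ 2 * (m x * m x') ∂μ ∂μ =
      2 * (∫ x, m x ∂μ) * ∫ x, ‖a x - (∫ x, m x ∂μ)⁻¹ • ∫ x, m x • a x ∂μ‖ ^ 2 * m x ∂μ := by
  set P := ∫ x, m x ∂μ
  set c := ∫ x, m x • a x ∂μ
  have hlin : ∀ (e : F) (α β : ℝ), ∫ x, (α * m x - β * ⟪e, m x • a x⟫) ∂μ = α * P - β * ⟪e, c⟫ := by
    intro e α β
    rw [integral_sub (hm.const_mul α) ((hma.const_inner e).const_mul β), integral_const_mul,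
      integral_const_mul, integral_inner hma]
  have hinner : ∀ x,
      ∫ x', ‖a x - a x'‖ ^ 2 * (m x * m x') ∂μ = m x * (2 * r ^ 2 * P - 2 * ⟪a x, c⟫) := by
    intro x
    rw [← hlin, ← integral_const_mul]
    congr 1 with x'
    rw [norm_sub_sq_real, hr, hr, real_inner_smul_right]
    ring
  have hpair :
      ∫ x, ∫ x', ‖a x - a x'‖ ^ 2 * (m x * m x') ∂μ ∂μ = 2 * r ^ 2 * P * P - 2 * ⟪c, c⟫ := by
    rw [← hlin]
    congr 1 with x
    rw [hinner, real_inner_smul_right, real_inner_comm c]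
    ring
  have hvar : ∫ x, ‖a x - P⁻¹ • c‖ ^ 2 * m x ∂μ =
      (r ^ 2 + ‖P⁻¹ • c‖ ^ 2) * P - 2 * P⁻¹ * ⟪c, c⟫ := by
    rw [← hlin]
    congr 1 with x
    rw [norm_sub_sq_real, hr, real_inner_smul_right, real_inner_smul_right, real_inner_comm c]
    ring
  rw [hpair, hvar, norm_smul, Real.norm_eq_abs, mul_pow, sq_abs, real_inner_self_eq_norm_sq]
  field_simp
  ring

theorem mul_setIntegral_le_setIntegral_mul {g : X → ℝ} {S T : Set X} {c : ℝ} (hS : MeasurableSet S)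
    (hST : S ⊆ T) (hm : ∀ x, 0 ≤ m x) (hg : ∀ x, 0 ≤ g x) (hmS : IntegrableOn m S μ)
    (hgm : IntegrableOn (fun x => g x * m x) T μ) (hc : ∀ x ∈ S, c ≤ g x) :
    c * ∫ x in S, m x ∂μ ≤ ∫ x in T, g x * m x ∂μ :=
  calc c * ∫ x in S, m x ∂μ = ∫ x in S, c * m x ∂μ := (integral_const_mul _ _).symm
    _ ≤ ∫ x in S, g x * m x ∂μ := setIntegral_mono_on (hmS.const_mul c) (hgm.mono_set hST) hS
        fun x hx => mul_le_mul_of_nonneg_right (hc x hx) (hm x)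
    _ ≤ ∫ x in T, g x * m x ∂μ := setIntegral_mono_set hgm
        (ae_of_all _ fun x => mul_nonneg (hg x) (hm x)) hST.eventuallyLE

theorem setIntegral_eq_sum_setIntegral_inter_preimage {ι : Type*}
    [NormedSpace ℝ F] [Fintype ι] [MeasurableSpace ι] [MeasurableSingletonClass ι]
    {y : X → ι} (hy : Measurable y) {S : Set X} (hS : MeasurableSet S)
    {g : X → F} (hg : IntegrableOn g S μ) :
    ∫ x in S, g x ∂μ = ∑ i, ∫ x in S ∩ y ⁻¹' {i}, g x ∂μ := by
  have hS_eq : S = ⋃ i, S ∩ y ⁻¹' {i} := by ext x; simp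
  conv_lhs => rw [hS_eq]
  refine integral_iUnion_fintype (fun i => hS.inter (hy (measurableSet_singleton i)))
    (fun i j hij => ?_) fun i => hg.mono_set Set.inter_subset_left
  exact ((Set.disjoint_singleton.2 hij).preimage y).mono Set.inter_subset_right
    Set.inter_subset_right

theorem measurableSet_exists_norm_sub_le {ι : Type*} [Countable ι] [MeasurableSpace ι]
    [MeasurableSingletonClass ι] {y : X → ι} (hy : Measurable y)
    (ha : StronglyMeasurable a) (c : ι → F) :
    MeasurableSet {x | ∃ j, j ≠ y x ∧ ‖a x - c j‖ ≤ ‖a x - c (y x)‖} := by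
  have hslice : ∀ j, Measurable fun x => ‖a x - c j‖ :=
    fun j => (ha.sub stronglyMeasurable_const).norm.measurable
  have hdist : Measurable fun p : X × ι => ‖a p.1 - c p.2‖ :=
    measurable_from_prod_countable_left hslice
  simp only [Set.ofPred_exists, Set.ofPred_and]
  exact MeasurableSet.iUnion fun j => (measurableSet_eq_fun measurable_const hy).compl.inter
    (measurableSet_le (hdist.comp (measurable_id.prodMk measurable_const))
      (hdist.comp (measurable_id.prodMk hy)))

end

namespace KCLStatement2

variable {X E : Type*} [MeasurableSpace X] [NormedAddCommGroup E] [InnerProductSpace ℝ E]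
  [CompleteSpace E] {d K : ℕ} {ν : Measure X} {w : X → X → ℝ}
  {h : EuclideanSpace ℝ (Fin d) → E} {f : X → EuclideanSpace ℝ (Fin d)} {M : Fin K → Set X}

theorem Dmin_le {i j : Fin K} (hij : i ≠ j) :
    Dmin ν w h f M ≤ ‖muF ν w h f M i - muF ν w h f M j‖ ^ 2 := by
  unfold Dmin
  exact ciInf_le ⟨0, by rintro _ ⟨p, rfl⟩; positivity⟩
    (⟨(i, j), hij⟩ : {q : Fin K × Fin K // q.1 ≠ q.2})

theorem two_le_of_Dmin_pos (hpos : 0 < Dmin ν w h f M) : 2 ≤ K := by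
  by_contra! hK
  have : Subsingleton (Fin K) := Fin.subsingleton_iff_le_one.2 (by omega)
  have : IsEmpty {q : Fin K × Fin K // q.1 ≠ q.2} := ⟨fun q => q.2 (Subsingleton.elim _ _)⟩
  exact hpos.ne' (Real.iInf_of_isEmpty _)

theorem setIntegral_setIntegral_sq_norm_sub_eq (hmint : Integrable (marg ν w) ν)
    (ha : AEStronglyMeasurable (fun x => h (f x)) ν) {r : ℝ} (hr : ∀ x, ‖h (f x)‖ = r)
    {i : Fin K} (hP : PXv ν w M i ≠ 0) :
    ∫ x in M i, ∫ x' in M i, ‖h (f x) - h (f x')‖ ^ 2 * (marg ν w x * marg ν w x') ∂ν ∂ν =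
      2 * PXv ν w M i * ∫ x in M i, ‖h (f x) - muF ν w h f M i‖ ^ 2 * marg ν w x ∂ν :=
  integral_integral_sq_norm_sub_mul_eq hr hmint.restrict
    (integrable_smul_of_norm_eq hmint ha hr).restrict hP

variable (ν w h f M) in
def misclassified (y : X → Fin K) : Set X :=
  {x | ∃ j, j ≠ y x ∧ ‖h (f x) - muF ν w h f M j‖ ≤ ‖h (f x) - muF ν w h f M (y x)‖}

variable {y : X → Fin K}

theorem measurableSet_misclassified (ha : StronglyMeasurable fun x => h (f x))
    (hy : Measurable y) : MeasurableSet (misclassified ν w h f M y) :=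
  measurableSet_exists_norm_sub_le hy ha _

theorem Dmin_div_four_mul_setIntegral_misclassified_le (hmint : Integrable (marg ν w) ν)
    (hm : ∀ x, 0 ≤ marg ν w x) (ha : StronglyMeasurable fun x => h (f x)) {r : ℝ}
    (hr : ∀ x, ‖h (f x)‖ = r) (hy : Measurable y) {i : Fin K} (hyM : {x | y x = i} ⊆ M i) :
    Dmin ν w h f M / 4 * ∫ x in misclassified ν w h f M y ∩ y ⁻¹' {i}, marg ν w x ∂ν ≤
      ∫ x in M i, ‖h (f x) - muF ν w h f M i‖ ^ 2 * marg ν w x ∂ν := by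
  refine mul_setIntegral_le_setIntegral_mul
    ((measurableSet_misclassified ha hy).inter (hy (measurableSet_singleton i)))
    (fun x hx => hyM hx.2) hm (fun x => sq_nonneg _) hmint.integrableOn
    (integrable_sq_norm_sub_mul hmint ha.aestronglyMeasurable hr _).integrableOn ?_
  rintro x ⟨⟨j, hj, hcloser⟩, rfl : y x = i⟩
  linarith [(Dmin_le hj : Dmin ν w h f M ≤ _), sq_norm_sub_le_four_mul_sq_norm_sub hcloser]

theorem Dmin_mul_PXv_mul_setIntegral_misclassified_le (hmint : Integrable (marg ν w) ν)
    (hm : ∀ x, 0 ≤ marg ν w x) (ha : StronglyMeasurable fun x => h (f x)) {r : ℝ}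
    (hr : ∀ x, ‖h (f x)‖ = r) (hy : Measurable y) {i : Fin K} (hyM : {x | y x = i} ⊆ M i)
    (hP : 0 < PXv ν w M i) :
    Dmin ν w h f M * PXv ν w M i / 2 *
        ∫ x in misclassified ν w h f M y ∩ y ⁻¹' {i}, marg ν w x ∂ν ≤
      ∫ x in M i, ∫ x' in M i, ‖h (f x) - h (f x')‖ ^ 2 * (marg ν w x * marg ν w x') ∂ν ∂ν := by
  rw [setIntegral_setIntegral_sq_norm_sub_eq hmint ha.aestronglyMeasurable hr hP.ne']
  calc Dmin ν w h f M * PXv ν w M i / 2 *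
        ∫ x in misclassified ν w h f M y ∩ y ⁻¹' {i}, marg ν w x ∂ν
      = 2 * PXv ν w M i * (Dmin ν w h f M / 4 *
          ∫ x in misclassified ν w h f M y ∩ y ⁻¹' {i}, marg ν w x ∂ν) := by ring
    _ ≤ _ := mul_le_mul_of_nonneg_left
        (Dmin_div_four_mul_setIntegral_misclassified_le hmint hm ha hr hy hyM) (by positivity)

theorem downstream_classification_error_bound_general
    {X : Type*} [MeasurableSpace X]
    {E : Type*} [NormedAddCommGroup E] [InnerProductSpace ℝ E] [CompleteSpace E]
    {d : ℕ}
    (ν : Measure X)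
    (w : X → X → ℝ)
    (hmint : Integrable (marg ν w) ν)
    (hmpos : ∀ x, 0 < marg ν w x)
    -- Assumption 1 on the kernel `k(z,z') = ⟪h z, h z'⟫`
    (h : EuclideanSpace ℝ (Fin d) → E) (hcont : Continuous h)
    (ψ : ℝ → ℝ)
    (hker : ∀ z z' : EuclideanSpace ℝ (Fin d), ‖z‖ = 1 → ‖z'‖ = 1 →
      (⟪h z, h z'⟫ : ℝ) = ψ (⟪z, z'⟫ : ℝ))
    -- Assumption 2(A,B), with clusters of positive mass
    (K : ℕ)
    (M : Fin K → Set X)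
    (hMpos : ∀ i, 0 < PXv ν w M i)
    -- Assumption 2(C): a measurable labeling function compatible with the clusters
    (y : X → Fin K) (hy : Measurable y) (hyM : ∀ i, {x | y x = i} ⊆ M i)
    -- a meaningful measurable encoder
    (f : X → EuclideanSpace ℝ (Fin d)) (hf : Measurable f) (hfs : ∀ x, ‖f x‖ = 1)
    (hmeaningful : 0 < Dmin ν w h f M) :
    (∫ x in {x : X | ∃ j : Fin K, j ≠ y x ∧
        ‖h (f x) - muF ν w h f M j‖ ≤ ‖h (f x) - muF ν w h f M (y x)‖},
      marg ν w x ∂ν) ≤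
      8 * ((K : ℝ) - 1) * aQuant ν w h f M /
        (Dmin ν w h f M * ⨅ i, PXv ν w M i) := by
  have hK := two_le_of_Dmin_pos hmeaningful
  have : Nonempty (Fin K) := ⟨⟨0, by omega⟩⟩
  obtain ⟨i₀, hi₀⟩ := exists_eq_ciInf_of_finite (f := fun i => PXv ν w M i)
  set Δ := Dmin ν w h f M
  set Pm := ⨅ i, PXv ν w M i
  have ha : StronglyMeasurable fun x => h (f x) :=
    hcont.comp_stronglyMeasurable hf.stronglyMeasurable
  have hr x : ‖h (f x)‖ = √(ψ 1) := norm_eq_sqrt_of_inner_eq_comp_inner hker (hfs x)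
  have hm x : 0 ≤ marg ν w x := (hmpos x).le
  have hB : MeasurableSet (misclassified ν w h f M y) := measurableSet_misclassified ha hy
  have hPm_pos : 0 < Pm := hi₀ ▸ hMpos i₀
  have hPm_le : ∀ i, Pm ≤ PXv ν w M i := ciInf_le (Finite.bddBelow_range _)
  have key :
      Δ * Pm / 2 * ∫ x in misclassified ν w h f M y, marg ν w x ∂ν ≤ aQuant ν w h f M := by
    rw [setIntegral_eq_sum_setIntegral_inter_preimage hy hB hmint.integrableOn, Finset.mul_sum,
      aQuant]
    refine Finset.sum_le_sum fun i _ => le_trans ?_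
      (Dmin_mul_PXv_mul_setIntegral_misclassified_le hmint hm ha hr hy (hyM i) (hMpos i))
    refine mul_le_mul_of_nonneg_right (by gcongr; exact hPm_le i)
      (setIntegral_nonneg (hB.inter (hy (measurableSet_singleton i))) fun x _ => hm x)
  have hA : 0 ≤ aQuant ν w h f M :=
    (mul_nonneg (by positivity) (setIntegral_nonneg hB fun x _ => hm x)).trans key
  calc ∫ x in misclassified ν w h f M y, marg ν w x ∂ν
        ≤ 2 * aQuant ν w h f M / (Δ * Pm) := by
        rw [le_div_iff₀ (by positivity)]; linarith
    _ ≤ 8 * ((K : ℝ) - 1) * aQuant ν w h f M / (Δ * Pm) := by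
        gcongr
        have : (2 : ℝ) ≤ K := by exact_mod_cast hK
        linarith

/-- **Downstream classification error bound (Theorem 5.2 / Theorem C.1).**  Under Assumptions
1 and 2(A,B,C), for every meaningful measurable encoder `f` the `P_X`-mass of the set of
points on which the nearest cluster mean disagrees with the label is at most
`8(K−1)·𝔞(f) / (Δ_min(f) · minᵢ P_X(Mᵢ))`. -/
theorem downstream_classification_error_bound
    {X : Type*} [MeasurableSpace X]
    {E : Type*} [NormedAddCommGroup E] [InnerProductSpace ℝ E] [CompleteSpace E]
    {d : ℕ} (hd : 0 < d)
    (ν : Measure X) [SigmaFinite ν]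
    (w : X → X → ℝ)
    (hwmeas : Measurable (Function.uncurry w))
    (hwnn : ∀ x x', 0 ≤ w x x')
    (hwint : Integrable (fun p : X × X => w p.1 p.2) (ν.prod ν))
    (hwone : ∫ p, w p.1 p.2 ∂(ν.prod ν) = 1)
    (hmint : Integrable (marg ν w) ν)
    (hmpos : ∀ x, 0 < marg ν w x)
    -- Assumption 1 on the kernel `k(z,z') = ⟪h z, h z'⟫`
    (h : EuclideanSpace ℝ (Fin d) → E) (hcont : Continuous h)
    (ψ : ℝ → ℝ) (ρ : ℝ≥0) (hψlip : LipschitzOnWith ρ ψ (Set.Icc (-1 : ℝ) 1))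
    (hker : ∀ z z' : EuclideanSpace ℝ (Fin d), ‖z‖ = 1 → ‖z'‖ = 1 →
      (⟪h z, h z'⟫ : ℝ) = ψ (⟪z, z'⟫ : ℝ))
    (lam : ℝ) (hlam : 0 ≤ lam)
    -- Assumption 2(A,B), with clusters of positive mass
    (K : ℕ) (hK : 0 < K) (δ : ℝ)
    (M : Fin K → Set X) (hMmeas : ∀ i, MeasurableSet (M i))
    (hcover : (⋃ i, M i) = Set.univ)
    (hsim : ∀ i : Fin K, ∀ x ∈ M i, ∀ x' ∈ M i, δ ≤ simFun ν w lam x x')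
    (hMpos : ∀ i, 0 < PXv ν w M i)
    -- Assumption 2(C): a measurable labeling function compatible with the clusters
    (y : X → Fin K) (hy : Measurable y) (hyM : ∀ i, {x | y x = i} ⊆ M i)
    -- a meaningful measurable encoder
    (f : X → EuclideanSpace ℝ (Fin d)) (hf : Measurable f) (hfs : ∀ x, ‖f x‖ = 1)
    (hmeaningful : 0 < Dmin ν w h f M) :
    (∫ x in {x : X | ∃ j : Fin K, j ≠ y x ∧
        ‖h (f x) - muF ν w h f M j‖ ≤ ‖h (f x) - muF ν w h f M (y x)‖},
      marg ν w x ∂ν) ≤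
      8 * ((K : ℝ) - 1) * aQuant ν w h f M /
        (Dmin ν w h f M * ⨅ i, PXv ν w M i) :=
  downstream_classification_error_bound_general ν w hmint hmpos h hcont ψ hker K M hMpos y hy hyM f
    hf hfs hmeaningful

end KCLStatement2
end
end

section
/- The decoupled InfoNCE loss upper-bounds the linear kernel contrastive loss (Proposition G.1, inequality (7.1)): For every measurable f : X → S^{d−1}, every τ > 0, λ ≥ 0 and integer M ≥ 1, τ^{−1}·L_LinKCL(f;λ) ≤ L̃_NCE(f;τ,λ) + λ·log(1/M), where L̃_NCE(f;τ,λ) := −E_{(x,x⁺)}[f(x)⊤f(x⁺)/τ] + λ·E_{(x,x⁺),x_1⁻,…,x_M⁻}[ log( e^{f(x)⊤f(x⁺)/τ} + Σ_{i=1}^M e^{f(x)⊤f(x_i⁻)/τ} ) ]. In particular, taking λ = 1 yields τ^{−1}·L_LinKCL(f;1) ≤ L_NCE(f;τ) + log(1/M) for the InfoNCE loss. -/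
/-!
For fixed `x`, Jensen's inequality for `exp` bounds the mean of the `M` negative scores
`f(x)⊤f(xᵢ⁻)/τ` by their log-sum-exp minus `log M`, and adding the positive term
`e^{f(x)⊤f(x⁺)/τ}` inside the logarithm only increases it. Each negative pair `(x, xᵢ⁻)` has
law `P_X ⊗ P_X`, because the first marginal of `P₊` is `P_X`, so taking expectations gives
`τ⁻¹ E[f(x)⊤f(x⁻)] ≤ E[log(…)] + log(1/M)`; multiplying by `λ` and adding the positive term
gives the bound. For `λ = 1` it is the InfoNCE bound, since `log(e^s / D) = s - log D`.
-/

open MeasureTheory Finset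
open scoped RealInnerProductSpace

namespace Real

theorem inv_card_mul_sum_le_log_sum_exp_sub_log_card {ι : Type*} [Fintype ι] [Nonempty ι]
    (a : ι → ℝ) :
    (Fintype.card ι : ℝ)⁻¹ * ∑ i, a i ≤ log (∑ i, exp (a i)) - log (Fintype.card ι) := by
  have hn : (0 : ℝ) < Fintype.card ι := by exact_mod_cast Fintype.card_pos
  have jensen : exp (∑ i, (Fintype.card ι : ℝ)⁻¹ • a i) ≤
      ∑ i, (Fintype.card ι : ℝ)⁻¹ • exp (a i) :=
    convexOn_exp.map_sum_le (fun _ _ => by positivity) (by simp [hn.ne'])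
      (fun _ _ => Set.mem_univ _)
  simp only [smul_eq_mul, ← mul_sum] at jensen
  calc (Fintype.card ι : ℝ)⁻¹ * ∑ i, a i
      = log (exp ((Fintype.card ι : ℝ)⁻¹ * ∑ i, a i)) := (log_exp _).symm
    _ ≤ log ((Fintype.card ι : ℝ)⁻¹ * ∑ i, exp (a i)) := log_le_log (exp_pos _) jensen
    _ = log (∑ i, exp (a i)) - log (Fintype.card ι) := by
      rw [log_mul (inv_ne_zero hn.ne') (sum_pos (fun i _ => exp_pos (a i)) univ_nonempty).ne',
        log_inv]
      ring

theorem abs_log_exp_add_sum_exp_le {ι : Type*} [Fintype ι] {b C : ℝ} {a : ι → ℝ}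
    (hb : |b| ≤ C) (ha : ∀ i, |a i| ≤ C) :
    |log (exp b + ∑ i, exp (a i))| ≤ C + log (Fintype.card ι + 1) := by
  set S := exp b + ∑ i, exp (a i)
  have hsum_nonneg : 0 ≤ ∑ i, exp (a i) := sum_nonneg fun i _ => (exp_pos (a i)).le
  have hS_lower : exp (-C) ≤ S :=
    (exp_le_exp.2 (neg_le_of_abs_le hb)).trans (le_add_of_nonneg_right hsum_nonneg)
  have hS_upper : S ≤ (Fintype.card ι + 1) * exp C := by
    have hsum : ∑ i, exp (a i) ≤ Fintype.card ι * exp C := by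
      simpa using sum_le_sum fun i (_ : i ∈ univ) => exp_le_exp.2 (le_of_abs_le (ha i))
    linarith [exp_le_exp.2 (le_of_abs_le hb)]
  have hlog_card : 0 ≤ log (Fintype.card ι + 1) :=
    log_nonneg (le_add_of_nonneg_left (Nat.cast_nonneg _))
  rw [abs_le]
  constructor
  · linarith [(log_exp (-C)).symm.trans_le (log_le_log (exp_pos _) hS_lower)]
  · have := log_le_log (exp_pos b |>.trans_le (le_add_of_nonneg_right hsum_nonneg)) hS_upper
    rw [log_mul (by positivity) (exp_pos C).ne', log_exp] at this
    linarith

end Real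

open Real

theorem integrable_log_exp_add_sum_exp {Ω ι : Type*} [MeasurableSpace Ω] [Fintype ι]
    {μ : Measure Ω} [IsFiniteMeasure μ] {b : Ω → ℝ} {a : Ω → ι → ℝ} {C : ℝ}
    (hb : Measurable b) (ha : ∀ i, Measurable fun ω => a ω i)
    (hbC : ∀ ω, |b ω| ≤ C) (haC : ∀ ω i, |a ω i| ≤ C) :
    Integrable (fun ω => log (exp (b ω) + ∑ i, exp (a ω i))) μ :=
  .of_bound (Measurable.log (by fun_prop)).aestronglyMeasurable (C + log (Fintype.card ι + 1))
    (.of_forall fun ω => abs_log_exp_add_sum_exp_le (hbC ω) (haC ω))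

theorem integral_comp_fst_eval_prod_pi {α β γ ι E : Type*} [MeasurableSpace α]
    [MeasurableSpace β] [MeasurableSpace γ] [Fintype ι] [NormedAddCommGroup E] [NormedSpace ℝ E]
    {μ : Measure (α × β)} [SFinite μ] (ν : ι → Measure γ) [∀ i, IsProbabilityMeasure (ν i)]
    (i : ι) {g : α × γ → E} (hg : AEStronglyMeasurable g ((μ.map Prod.fst).prod (ν i))) :
    ∫ q, g (q.1.1, q.2 i) ∂μ.prod (Measure.pi ν) = ∫ p, g p ∂(μ.map Prod.fst).prod (ν i) := by
  have h := (MeasurePreserving.mk measurable_fst rfl : MeasurePreserving Prod.fst μ _).prod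
    (measurePreserving_eval ν i)
  rw [← h.map_eq, integral_map h.measurable.aemeasurable (h.map_eq ▸ hg)]
  rfl

theorem abs_real_inner_div_le_of_norm_eq_one {F : Type*} [NormedAddCommGroup F]
    [InnerProductSpace ℝ F] {x y : F} (hx : ‖x‖ = 1) (hy : ‖y‖ = 1) (τ : ℝ) :
    |⟪x, y⟫ / τ| ≤ |τ|⁻¹ := by
  rw [abs_div, ← one_div]
  exact div_le_div_of_nonneg_right (abs_le.2 (real_inner_mem_Icc_of_norm_eq_one hx hy))
    (abs_nonneg τ)

theorem integrable_inner_comp_of_norm_eq_one {Ω X F : Type*} [MeasurableSpace Ω]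
    [MeasurableSpace X] [NormedAddCommGroup F] [InnerProductSpace ℝ F] [MeasurableSpace F]
    [BorelSpace F] [SecondCountableTopology F] {μ : Measure Ω} [IsFiniteMeasure μ] {f : X → F}
    (hf : Measurable f) (hfs : ∀ x, ‖f x‖ = 1) {u v : Ω → X}
    (hu : Measurable u) (hv : Measurable v) :
    Integrable (fun ω => ⟪f (u ω), f (v ω)⟫) μ :=
  .of_bound (by fun_prop) 1 (.of_forall fun ω =>
    abs_le.2 (real_inner_mem_Icc_of_norm_eq_one (hfs (u ω)) (hfs (v ω))))

theorem integral_log_exp_div_exp_add {Ω : Type*} [MeasurableSpace Ω] {μ : Measure Ω}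
    {g s : Ω → ℝ} (hs : ∀ ω, 0 ≤ s ω) (hg : Integrable g μ)
    (hgs : Integrable (fun ω => log (exp (g ω) + s ω)) μ) :
    ∫ ω, log (exp (g ω) / (exp (g ω) + s ω)) ∂μ =
      ∫ ω, g ω ∂μ - ∫ ω, log (exp (g ω) + s ω) ∂μ := by
  rw [← integral_sub hg hgs]
  refine integral_congr_ae (.of_forall fun ω => ?_)
  dsimp only
  rw [log_div (exp_ne_zero _) (add_pos_of_pos_of_nonneg (exp_pos _) (hs ω)).ne', log_exp]

section

variable {X F : Type*} [MeasurableSpace X] [NormedAddCommGroup F] [InnerProductSpace ℝ F]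
  [MeasurableSpace F] [BorelSpace F] [SecondCountableTopology F] {f : X → F}

theorem integrable_log_exp_inner_add_sum_exp_inner {ι : Type*} [Fintype ι]
    {μ : Measure ((X × X) × (ι → X))} [IsFiniteMeasure μ]
    (hf : Measurable f) (hfs : ∀ x, ‖f x‖ = 1) (τ : ℝ) :
    Integrable (fun q : (X × X) × (ι → X) => log (exp (⟪f q.1.1, f q.1.2⟫ / τ)
      + ∑ i, exp (⟪f q.1.1, f (q.2 i)⟫ / τ))) μ :=
  integrable_log_exp_add_sum_exp (by fun_prop) (fun i => by fun_prop)
    (fun q => abs_real_inner_div_le_of_norm_eq_one (hfs _) (hfs _) τ)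
    (fun q i => abs_real_inner_div_le_of_norm_eq_one (hfs _) (hfs _) τ)

theorem inv_mul_integral_inner_le_integral_log_exp_add_sum_exp
    (PX : Measure X) [IsProbabilityMeasure PX]
    (Pplus : Measure (X × X)) [IsProbabilityMeasure Pplus] (hfst : Pplus.map Prod.fst = PX)
    (hf : Measurable f) (hfs : ∀ x, ‖f x‖ = 1) (τ : ℝ) {M : ℕ} (hM : 1 ≤ M) :
    τ⁻¹ * ∫ p, ⟪f p.1, f p.2⟫ ∂PX.prod PX ≤
      ∫ q, log (exp (⟪f q.1.1, f q.1.2⟫ / τ) + ∑ i : Fin M, exp (⟪f q.1.1, f (q.2 i)⟫ / τ))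
        ∂Pplus.prod (Measure.pi fun _ => PX) + log (1 / M) := by
  set μ := Pplus.prod (Measure.pi fun _ : Fin M => PX)
  have : Nonempty (Fin M) := ⟨⟨0, hM⟩⟩
  have hlog := integrable_log_exp_inner_add_sum_exp_inner (μ := μ) hf hfs τ
  have hneg : ∀ i : Fin M,
      Integrable (fun q : (X × X) × (Fin M → X) => ⟪f q.1.1, f (q.2 i)⟫ / τ) μ := fun i =>
    (integrable_inner_comp_of_norm_eq_one hf hfs (by fun_prop) (by fun_prop)).div_const τ
  have hneg_eq : ∀ i : Fin M,
      ∫ q, ⟪f q.1.1, f (q.2 i)⟫ / τ ∂μ = τ⁻¹ * ∫ p, ⟪f p.1, f p.2⟫ ∂PX.prod PX := by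
    intro i
    rw [integral_comp_fst_eval_prod_pi (fun _ => PX) i (g := fun p => ⟪f p.1, f p.2⟫ / τ)
      (by fun_prop), hfst, integral_div, div_eq_inv_mul]
  have hjensen : ∀ q : (X × X) × (Fin M → X), (M : ℝ)⁻¹ * ∑ i, ⟪f q.1.1, f (q.2 i)⟫ / τ ≤
      log (exp (⟪f q.1.1, f q.1.2⟫ / τ) + ∑ i : Fin M, exp (⟪f q.1.1, f (q.2 i)⟫ / τ))
        + log (1 / M) := by
    intro q
    have h := inv_card_mul_sum_le_log_sum_exp_sub_log_card fun i => ⟪f q.1.1, f (q.2 i)⟫ / τ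
    rw [Fintype.card_fin] at h
    have hmono := log_le_log (sum_pos (fun i _ => exp_pos _) univ_nonempty)
      (le_add_of_nonneg_left (exp_pos (⟪f q.1.1, f q.1.2⟫ / τ)).le :
        ∑ i, exp (⟪f q.1.1, f (q.2 i)⟫ / τ) ≤ _)
    rw [one_div, log_inv]
    linarith
  calc τ⁻¹ * ∫ p, ⟪f p.1, f p.2⟫ ∂PX.prod PX
      = ∫ q, (M : ℝ)⁻¹ * ∑ i, ⟪f q.1.1, f (q.2 i)⟫ / τ ∂μ := by
        rw [integral_const_mul, integral_finsetSum _ fun i _ => hneg i,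
          sum_congr rfl fun i _ => hneg_eq i]
        simp only [sum_const, card_univ, Fintype.card_fin, nsmul_eq_mul]
        field_simp
    _ ≤ ∫ q, (log (exp (⟪f q.1.1, f q.1.2⟫ / τ) + ∑ i : Fin M, exp (⟪f q.1.1, f (q.2 i)⟫ / τ))
        + log (1 / M)) ∂μ :=
        integral_mono ((integrable_finsetSum _ fun i _ => hneg i).const_mul _)
          (hlog.add (integrable_const _)) hjensen
    _ = _ := by rw [integral_add hlog (integrable_const _), integral_const]; simp

end

theorem decoupled_infonce_upper_bounds_linear_kcl_general
    {X : Type*} [MeasurableSpace X] {d : ℕ}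
    (PX : Measure X) [IsProbabilityMeasure PX]
    (Pplus : Measure (X × X)) [IsProbabilityMeasure Pplus]
    (hfst : Pplus.map Prod.fst = PX)
    (f : X → EuclideanSpace ℝ (Fin d)) (hf : Measurable f) (hfs : ∀ x, ‖f x‖ = 1)
    (τ lam : ℝ) (hlam : 0 ≤ lam) (M : ℕ) (hM : 1 ≤ M) :
    (τ⁻¹ * (-(∫ p, (⟪f p.1, f p.2⟫ : ℝ) ∂Pplus)
        + lam * ∫ p, (⟪f p.1, f p.2⟫ : ℝ) ∂(PX.prod PX)) ≤
      (-(∫ p, (⟪f p.1, f p.2⟫ : ℝ) / τ ∂Pplus)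
        + lam * ∫ q, Real.log (Real.exp ((⟪f q.1.1, f q.1.2⟫ : ℝ) / τ)
            + ∑ i : Fin M, Real.exp ((⟪f q.1.1, f (q.2 i)⟫ : ℝ) / τ))
          ∂(Pplus.prod (Measure.pi fun _ : Fin M => PX)))
        + lam * Real.log (1 / M)) ∧
    (τ⁻¹ * (-(∫ p, (⟪f p.1, f p.2⟫ : ℝ) ∂Pplus)
        + 1 * ∫ p, (⟪f p.1, f p.2⟫ : ℝ) ∂(PX.prod PX)) ≤
      -(∫ q, Real.log (Real.exp ((⟪f q.1.1, f q.1.2⟫ : ℝ) / τ) /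
            (Real.exp ((⟪f q.1.1, f q.1.2⟫ : ℝ) / τ)
              + ∑ i : Fin M, Real.exp ((⟪f q.1.1, f (q.2 i)⟫ : ℝ) / τ)))
          ∂(Pplus.prod (Measure.pi fun _ : Fin M => PX)))
        + Real.log (1 / M)) := by
  have key := inv_mul_integral_inner_le_integral_log_exp_add_sum_exp PX Pplus hfst
    hf hfs τ hM
  have hpos : ∫ p, ⟪f p.1, f p.2⟫ / τ ∂Pplus = τ⁻¹ * ∫ p, ⟪f p.1, f p.2⟫ ∂Pplus := by
    rw [integral_div, div_eq_inv_mul]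
  refine ⟨?_, ?_⟩
  · rw [hpos]
    linear_combination mul_le_mul_of_nonneg_left key hlam
  · rw [integral_log_exp_div_exp_add (fun q => sum_nonneg fun i _ => (exp_pos _).le)
      ((integrable_inner_comp_of_norm_eq_one hf hfs (by fun_prop) (by fun_prop)).div_const τ)
      (integrable_log_exp_inner_add_sum_exp_inner hf hfs τ),
      integral_fun_fst (fun p : X × X => ⟪f p.1, f p.2⟫ / τ), probReal_univ, one_smul, hpos]
    linear_combination key

/-- **The decoupled InfoNCE loss upper-bounds the linear kernel contrastive loss
(Proposition G.1, inequality (7.1)).** For every measurable `f : X → S^{d−1}`, `τ > 0`,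
`λ ≥ 0` and integer `M ≥ 1`,
`τ⁻¹·L_LinKCL(f;λ) ≤ L̃_NCE(f;τ,λ) + λ·log(1/M)`, where
`L̃_NCE(f;τ,λ) := −E_{(x,x⁺)}[f(x)⊤f(x⁺)/τ]
  + λ·E[ log( e^{f(x)⊤f(x⁺)/τ} + Σ_{i=1}^M e^{f(x)⊤f(xᵢ⁻)/τ} ) ]` with `(x,x⁺) ∼ P₊` and
`x₁⁻,…,x_M⁻` i.i.d. `P_X` independent of `(x,x⁺)`, and
`L_LinKCL(f;λ) := −E_{(x,x⁺)}[f(x)⊤f(x⁺)] + λ·E_{(x,x⁻)}[f(x)⊤f(x⁻)]`.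
In particular, taking `λ = 1` yields `τ⁻¹·L_LinKCL(f;1) ≤ L_NCE(f;τ) + log(1/M)` for the
InfoNCE loss. -/
theorem decoupled_infonce_upper_bounds_linear_kcl
    {X : Type*} [MeasurableSpace X] {d : ℕ}
    (PX : Measure X) [IsProbabilityMeasure PX]
    (Pplus : Measure (X × X)) [IsProbabilityMeasure Pplus]
    (hfst : Pplus.map Prod.fst = PX) (hsnd : Pplus.map Prod.snd = PX)
    (f : X → EuclideanSpace ℝ (Fin d)) (hf : Measurable f) (hfs : ∀ x, ‖f x‖ = 1)
    (τ lam : ℝ) (hτ : 0 < τ) (hlam : 0 ≤ lam) (M : ℕ) (hM : 1 ≤ M) :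
    (τ⁻¹ * (-(∫ p, (⟪f p.1, f p.2⟫ : ℝ) ∂Pplus)
        + lam * ∫ p, (⟪f p.1, f p.2⟫ : ℝ) ∂(PX.prod PX)) ≤
      (-(∫ p, (⟪f p.1, f p.2⟫ : ℝ) / τ ∂Pplus)
        + lam * ∫ q, Real.log (Real.exp ((⟪f q.1.1, f q.1.2⟫ : ℝ) / τ)
            + ∑ i : Fin M, Real.exp ((⟪f q.1.1, f (q.2 i)⟫ : ℝ) / τ))
          ∂(Pplus.prod (Measure.pi fun _ : Fin M => PX)))
        + lam * Real.log (1 / M)) ∧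
    (τ⁻¹ * (-(∫ p, (⟪f p.1, f p.2⟫ : ℝ) ∂Pplus)
        + 1 * ∫ p, (⟪f p.1, f p.2⟫ : ℝ) ∂(PX.prod PX)) ≤
      -(∫ q, Real.log (Real.exp ((⟪f q.1.1, f q.1.2⟫ : ℝ) / τ) /
            (Real.exp ((⟪f q.1.1, f q.1.2⟫ : ℝ) / τ)
              + ∑ i : Fin M, Real.exp ((⟪f q.1.1, f (q.2 i)⟫ : ℝ) / τ)))
          ∂(Pplus.prod (Measure.pi fun _ : Fin M => PX)))
        + Real.log (1 / M)) :=
  decoupled_infonce_upper_bounds_linear_kcl_general PX Pplus hfst f hf hfs τ lam hlam M hM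
end

section
/- The decoupled-contrastive-learning variant of InfoNCE upper-bounds the linear kernel contrastive loss (Proposition G.1, inequality (7.3)): For every measurable f : X → S^{d−1}, every τ > 0, λ ≥ 0 and integer M ≥ 1, τ^{−1}·L_LinKCL(f;λ) ≤ −E_{(x,x⁺)}[f(x)⊤f(x⁺)/τ] + λ·E_{x, x_1⁻,…,x_M⁻}[ log Σ_{i=1}^M e^{f(x)⊤f(x_i⁻)/τ} ] + λ·log(1/M), where x has law P_X and x_1⁻,…,x_M⁻ are i.i.d. with law P_X independent of x. -/
open MeasureTheory
open scoped RealInnerProductSpace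

/-!
Jensen's inequality for `exp` gives `log ∑_{i<M} e^{tᵢ} ≥ log M + (1/M) ∑ tᵢ`. Take
`tᵢ = f(x)⊤f(xᵢ⁻)/τ` and integrate: each pair `(x, xᵢ⁻)` has law `P_X ⊗ P_X`, so the expected
log-sum-exp is at least `log M + E[f(x)⊤f(x⁻)]/τ`, and multiplying by `λ ≥ 0` gives the claim.
Since `‖f‖ = 1`, `|tᵢ| ≤ 1/τ`, which makes every integrand bounded and hence integrable.
-/

open Finset

namespace Real

variable {ι : Type*} [Fintype ι] [Nonempty ι]

theorem log_card_add_mean_le_log_sum_exp (t : ι → ℝ) :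
    log (Fintype.card ι) + (∑ i, t i) / Fintype.card ι ≤ log (∑ i, exp (t i)) := by
  have hcard : (0 : ℝ) < Fintype.card ι := by exact_mod_cast Fintype.card_pos
  have jensen :
      exp (∑ i, (Fintype.card ι : ℝ)⁻¹ * t i) ≤ ∑ i, (Fintype.card ι : ℝ)⁻¹ * exp (t i) := by
    simpa using convexOn_exp.map_sum_le (t := univ) (w := fun _ => (Fintype.card ι : ℝ)⁻¹)
      (p := t) (fun _ _ => by positivity) (by simp [hcard.ne']) (fun _ _ => Set.mem_univ _)
  rw [← mul_sum, ← mul_sum, ← div_eq_inv_mul, ← div_eq_inv_mul, le_div_iff₀ hcard] at jensen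
  calc log (Fintype.card ι) + (∑ i, t i) / Fintype.card ι
        = log (exp ((∑ i, t i) / Fintype.card ι) * Fintype.card ι) := by
        rw [log_mul (exp_ne_zero _) hcard.ne', log_exp, add_comm]
    _ ≤ log (∑ i, exp (t i)) := log_le_log (by positivity) jensen

theorem log_sum_exp_le_log_card_add {t : ι → ℝ} {C : ℝ} (ht : ∀ i, t i ≤ C) :
    log (∑ i, exp (t i)) ≤ log (Fintype.card ι) + C := by
  have hcard : (0 : ℝ) < Fintype.card ι := by exact_mod_cast Fintype.card_pos
  calc log (∑ i, exp (t i)) ≤ log (∑ _i : ι, exp C) :=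
        log_le_log (by positivity) (sum_le_sum fun i _ => exp_le_exp.2 (ht i))
    _ = log (Fintype.card ι) + C := by
        rw [sum_const, card_univ, nsmul_eq_mul, log_mul hcard.ne' (exp_ne_zero _), log_exp]

theorem abs_log_sum_exp_sub_log_card_le {t : ι → ℝ} {C : ℝ} (ht : ∀ i, |t i| ≤ C) :
    |log (∑ i, exp (t i)) - log (Fintype.card ι)| ≤ C := by
  have hcard : (0 : ℝ) < Fintype.card ι := by exact_mod_cast Fintype.card_pos
  have lower := log_card_add_mean_le_log_sum_exp t
  have upper := log_sum_exp_le_log_card_add fun i => (abs_le.1 (ht i)).2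
  have mean_ge : -C ≤ (∑ i, t i) / Fintype.card ι := by
    rw [le_div_iff₀ hcard]
    calc -C * Fintype.card ι = ∑ _i : ι, -C := by simp [mul_comm]
      _ ≤ ∑ i, t i := sum_le_sum fun i _ => (abs_le.1 (ht i)).1
  rw [abs_le]
  constructor <;> linarith

end Real

namespace MeasureTheory

section LogSumExp

variable {Ω ι : Type*} [MeasurableSpace Ω] {μ : Measure Ω} [Fintype ι] [Nonempty ι]
  {t : ι → Ω → ℝ} {C : ℝ}

theorem integrable_log_sum_exp [IsFiniteMeasure μ] (ht : ∀ i, AEMeasurable (t i) μ)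
    (hC : ∀ i ω, |t i ω| ≤ C) :
    Integrable (fun ω => Real.log (∑ i, Real.exp (t i ω))) μ := by
  refine Integrable.of_bound
    (Real.measurable_log.comp_aemeasurable (by fun_prop)).aestronglyMeasurable
    (C + |Real.log (Fintype.card ι)|) (ae_of_all _ fun ω => ?_)
  rw [Real.norm_eq_abs]
  have := abs_sub_abs_le_abs_sub (Real.log (∑ i, Real.exp (t i ω))) (Real.log (Fintype.card ι))
  linarith [Real.abs_log_sum_exp_sub_log_card_le fun i => hC i ω]

theorem log_card_add_mean_integral_le_integral_log_sum_exp [IsProbabilityMeasure μ]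
    (ht : ∀ i, AEMeasurable (t i) μ) (hC : ∀ i ω, |t i ω| ≤ C) :
    Real.log (Fintype.card ι) + (∑ i, ∫ ω, t i ω ∂μ) / Fintype.card ι ≤
      ∫ ω, Real.log (∑ i, Real.exp (t i ω)) ∂μ := by
  have ht_int : ∀ i, Integrable (t i) μ := fun i =>
    Integrable.of_bound (ht i).aestronglyMeasurable C (ae_of_all _ (hC i))
  calc Real.log (Fintype.card ι) + (∑ i, ∫ ω, t i ω ∂μ) / Fintype.card ι
        = ∫ ω, Real.log (Fintype.card ι) + (∑ i, t i ω) / Fintype.card ι ∂μ := by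
        rw [integral_add (integrable_const _)
            ((integrable_finsetSum _ fun i _ => ht_int i).div_const _), integral_const,
          integral_div, integral_finsetSum _ fun i _ => ht_int i]
        simp
    _ ≤ ∫ ω, Real.log (∑ i, Real.exp (t i ω)) ∂μ :=
        integral_mono ((integrable_const _).add
          ((integrable_finsetSum _ fun i _ => ht_int i).div_const _))
          (integrable_log_sum_exp ht hC) fun ω => Real.log_card_add_mean_le_log_sum_exp _

end LogSumExp

theorem integral_prod_pi_comp_eval {X Y E ι : Type*} [MeasurableSpace X] [MeasurableSpace Y]
    [NormedAddCommGroup E] [NormedSpace ℝ E] [Fintype ι] (μ : Measure X) [SFinite μ]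
    (ν : Measure Y) [IsProbabilityMeasure ν] {φ : X × Y → E}
    (hφ : AEStronglyMeasurable φ (μ.prod ν)) (i : ι) :
    ∫ q, φ (q.1, q.2 i) ∂(μ.prod (Measure.pi fun _ : ι => ν)) = ∫ p, φ p ∂(μ.prod ν) := by
  have hmp : MeasurePreserving (Prod.map id (Function.eval i))
      (μ.prod (Measure.pi fun _ : ι => ν)) (μ.prod ν) :=
    (MeasurePreserving.id μ).prod (measurePreserving_eval _ i)
  rw [← hmp.map_eq] at hφ ⊢
  exact (integral_map hmp.measurable.aemeasurable hφ).symm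

end MeasureTheory

theorem dcl_infonce_upper_bounds_linear_kcl_general
    {X : Type*} [MeasurableSpace X] {d : ℕ}
    (PX : Measure X) [IsProbabilityMeasure PX]
    (Pplus : Measure (X × X))
    (f : X → EuclideanSpace ℝ (Fin d)) (hf : Measurable f) (hfs : ∀ x, ‖f x‖ = 1)
    (τ lam : ℝ) (hτ : 0 < τ) (hlam : 0 ≤ lam) (M : ℕ) (hM : 1 ≤ M) :
    τ⁻¹ * (-(∫ p, (⟪f p.1, f p.2⟫ : ℝ) ∂Pplus)
        + lam * ∫ p, (⟪f p.1, f p.2⟫ : ℝ) ∂(PX.prod PX)) ≤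
      -(∫ p, (⟪f p.1, f p.2⟫ : ℝ) / τ ∂Pplus)
        + lam * ∫ q, Real.log (∑ i : Fin M, Real.exp ((⟪f q.1, f (q.2 i)⟫ : ℝ) / τ))
            ∂(PX.prod (Measure.pi fun _ : Fin M => PX))
        + lam * Real.log (1 / M) := by
  have : Nonempty (Fin M) := ⟨⟨0, hM⟩⟩
  have hM_pos : (0 : ℝ) < M := by exact_mod_cast hM
  have bound : ∀ (i : Fin M) (q : X × (Fin M → X)), |(⟪f q.1, f (q.2 i)⟫ : ℝ) / τ| ≤ τ⁻¹ := by
    intro i q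
    rw [abs_div, abs_of_pos hτ, ← one_div]
    gcongr
    simpa [hfs] using abs_real_inner_le_norm (f q.1) (f (q.2 i))
  have coord : ∀ i : Fin M,
      ∫ q, (⟪f q.1, f (q.2 i)⟫ : ℝ) / τ ∂(PX.prod (Measure.pi fun _ => PX)) =
        (∫ p, (⟪f p.1, f p.2⟫ : ℝ) ∂(PX.prod PX)) / τ := by
    intro i
    rw [integral_div, integral_prod_pi_comp_eval PX PX (φ := fun p => (⟪f p.1, f p.2⟫ : ℝ))
      (by fun_prop) i]
  have jensen := log_card_add_mean_integral_le_integral_log_sum_exp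
    (μ := PX.prod (Measure.pi fun _ : Fin M => PX)) (fun i => by fun_prop) bound
  simp only [coord, sum_const, card_univ, Fintype.card_fin, nsmul_eq_mul,
    mul_div_cancel_left₀ _ hM_pos.ne'] at jensen
  rw [integral_div, one_div, Real.log_inv]
  linear_combination mul_le_mul_of_nonneg_left jensen hlam

/-- **The decoupled-contrastive-learning variant of InfoNCE upper-bounds the linear kernel
contrastive loss (Proposition G.1, inequality (7.3)).** For every measurable
`f : X → S^{d−1}`, `τ > 0`, `λ ≥ 0` and integer `M ≥ 1`,
`τ⁻¹·L_LinKCL(f;λ) ≤ −E_{(x,x⁺)}[f(x)⊤f(x⁺)/τ]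
  + λ·E_{x,x₁⁻,…,x_M⁻}[ log Σ_{i=1}^M e^{f(x)⊤f(xᵢ⁻)/τ} ] + λ·log(1/M)`,
where `x` has law `P_X` and `x₁⁻,…,x_M⁻` are i.i.d. `P_X` independent of `x`, and
`L_LinKCL(f;λ) := −E_{(x,x⁺)}[f(x)⊤f(x⁺)] + λ·E_{(x,x⁻)}[f(x)⊤f(x⁻)]`. -/
theorem dcl_infonce_upper_bounds_linear_kcl
    {X : Type*} [MeasurableSpace X] {d : ℕ}
    (PX : Measure X) [IsProbabilityMeasure PX]
    (Pplus : Measure (X × X)) [IsProbabilityMeasure Pplus]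
    (hfst : Pplus.map Prod.fst = PX) (hsnd : Pplus.map Prod.snd = PX)
    (f : X → EuclideanSpace ℝ (Fin d)) (hf : Measurable f) (hfs : ∀ x, ‖f x‖ = 1)
    (τ lam : ℝ) (hτ : 0 < τ) (hlam : 0 ≤ lam) (M : ℕ) (hM : 1 ≤ M) :
    τ⁻¹ * (-(∫ p, (⟪f p.1, f p.2⟫ : ℝ) ∂Pplus)
        + lam * ∫ p, (⟪f p.1, f p.2⟫ : ℝ) ∂(PX.prod PX)) ≤
      -(∫ p, (⟪f p.1, f p.2⟫ : ℝ) / τ ∂Pplus)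
        + lam * ∫ q, Real.log (∑ i : Fin M, Real.exp ((⟪f q.1, f (q.2 i)⟫ : ℝ) / τ))
            ∂(PX.prod (Measure.pi fun _ : Fin M => PX))
        + lam * Real.log (1 / M) :=
  dcl_infonce_upper_bounds_linear_kcl_general PX Pplus f hf hfs τ lam hτ hlam M hM
end

section
/- The quadratic kernel contrastive loss is bounded by the spectral contrastive loss (Proposition G.2): For every measurable f : X → S^{d−1}, L_QKCL(f; 1/2) ≤ (1/2)·L_SCL(f) + 1/4, where L_QKCL(f;1/2) := −E_{(x,x⁺)}[(f(x)⊤f(x⁺))²] + (1/2)·E_{(x,x⁻)}[(f(x)⊤f(x⁻))²] and L_SCL(f) := −2·E_{(x,x⁺)}[f(x)⊤f(x⁺)] + E_{(x,x⁻)}[(f(x)⊤f(x⁻))²]. -/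
open MeasureTheory
open scoped RealInnerProductSpace

/-- **The quadratic kernel contrastive loss is bounded by the spectral contrastive loss
(Proposition G.2).** For every measurable `f : X → S^{d−1}`,
`L_QKCL(f; 1/2) ≤ (1/2)·L_SCL(f) + 1/4`, where
`L_QKCL(f;1/2) := −E_{(x,x⁺)}[(f(x)⊤f(x⁺))²] + (1/2)·E_{(x,x⁻)}[(f(x)⊤f(x⁻))²]` and
`L_SCL(f) := −2·E_{(x,x⁺)}[f(x)⊤f(x⁺)] + E_{(x,x⁻)}[(f(x)⊤f(x⁻))²]`. -/
theorem quadratic_kcl_le_spectral_contrastive_loss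
    {X : Type*} [MeasurableSpace X] {d : ℕ}
    (PX : Measure X) [IsProbabilityMeasure PX]
    (Pplus : Measure (X × X)) [IsProbabilityMeasure Pplus]
    (hfst : Pplus.map Prod.fst = PX) (hsnd : Pplus.map Prod.snd = PX)
    (f : X → EuclideanSpace ℝ (Fin d)) (hf : Measurable f) (hfs : ∀ x, ‖f x‖ = 1) :
    (-(∫ p, (⟪f p.1, f p.2⟫ : ℝ) ^ 2 ∂Pplus)
        + (1 / 2) * ∫ p, (⟪f p.1, f p.2⟫ : ℝ) ^ 2 ∂(PX.prod PX)) ≤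
      (1 / 2) * (-(2 * ∫ p, (⟪f p.1, f p.2⟫ : ℝ) ∂Pplus)
        + ∫ p, (⟪f p.1, f p.2⟫ : ℝ) ^ 2 ∂(PX.prod PX)) + 1 / 4 := by
  set g : X × X → ℝ := fun p => ⟪f p.1, f p.2⟫ with hg
  have hgm : Measurable g := by
    apply Measurable.inner (hf.comp measurable_fst) (hf.comp measurable_snd)
  have hgb : ∀ p, |g p| ≤ 1 := by
    intro p
    calc |g p| ≤ ‖f p.1‖ * ‖f p.2‖ := abs_real_inner_le_norm _ _
    _ = 1 := by rw [hfs, hfs]; ring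
  have hint1 : Integrable g Pplus := by
    apply Integrable.mono' (integrable_const 1) hgm.aestronglyMeasurable
    exact Filter.Eventually.of_forall fun p => by simpa using hgb p
  have hint2 : Integrable (fun p => g p ^ 2) Pplus := by
    apply Integrable.mono' (integrable_const 1) (hgm.pow_const 2).aestronglyMeasurable
    refine Filter.Eventually.of_forall fun p => ?_
    have h := abs_le.mp (hgb p)
    simp only [Real.norm_eq_abs, abs_pow, sq_abs]
    nlinarith
  have key : (∫ p, g p ∂Pplus) - (∫ p, g p ^ 2 ∂Pplus) ≤ 1 / 4 := by
    rw [← integral_sub hint1 hint2]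
    calc ∫ p, (g p - g p ^ 2) ∂Pplus ≤ ∫ _, (1 / 4 : ℝ) ∂Pplus := by
          apply integral_mono (hint1.sub hint2) (integrable_const _)
          intro p; simp only [Pi.sub_apply]; nlinarith [sq_nonneg (g p - 1 / 2)]
      _ = 1 / 4 := by simp
  linarith
end

section
/- Similarity function for two overlapping balls (Appendix B, overlapping example): Let r > 0 and v_1, v_2 ∈ ℝ^p with ‖v_1 − v_2‖₂ = 3r; let X̄ := B(v_1;r) ∪ B(v_2;r) and X := B(v_1;2r) ∪ B(v_2;2r) (open balls), with ν the Lebesgue measure restricted to X. Define a(x|x̄) := vol(B(v_1;2r))^{−1} Σ_{i=1}^2 1_{B(v_i;2r)×B(v_i;r)}(x,x̄), p_X̄(x̄) := (2·vol(B(v_1;r)))^{−1} on X̄, w(x,x') := ∫_{X̄} a(x|x̄)·a(x'|x̄)·p_X̄(x̄) dx̄ and w(x) := ∫_X w(x,x') dν(x'). Then w(x) > 0 for every x ∈ X (explicitly, w(x) = 1/(2·vol(B(v_1;2r))) on each exclusive region B(v_i;2r)∖B(v_j;2r) and w(x) = 1/vol(B(v_1;2r)) on B(v_1;2r)∩B(v_2;2r)),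 and sim(x,x';λ) := w(x,x')/(w(x)w(x')) − λ equals: 2 − λ if x and x' both lie in B(v_1;2r)∖B(v_2;2r) or both lie in B(v_2;2r)∖B(v_1;2r); −λ if one of x, x' lies in B(v_1;2r)∖B(v_2;2r) and the other in B(v_2;2r)∖B(v_1;2r); and 1 − λ in all remaining cases (i.e. when at least one of x, x' lies in B(v_1;2r)∩B(v_2;2r)). -/
/-! Because the small balls `B(v₁;r)` and `B(v₂;r)` are disjoint, the two terms of the kernel
`a(x|x̄)` never interact in `a(x|x̄) a(x'|x̄)`, so with `V = vol B(v₁;2r)` and `1ᵢ` the indicator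
of `B(vᵢ;2r)` one gets `w(x,x') = (2V²)⁻¹ (1₁(x) 1₁(x') + 1₂(x) 1₂(x'))`, and integrating once
more `w(x) = (2V)⁻¹ (1₁(x) + 1₂(x))`. Hence `sim(x,x';λ) + λ = 2(ac + bd)/((a + b)(c + d))` with
`(a, b) = (1₁(x), 1₂(x))` and `(c, d) = (1₁(x'), 1₂(x'))`, whose values on the regions are
read off directly. -/

open MeasureTheory Set
open scoped ENNReal

section MixtureKernel

variable {α β : Type*}

lemma indicator_one_add_indicator_one_pos {s t : Set α} {x : α} (hx : x ∈ s ∪ t) :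
    0 < s.indicator (1 : α → ℝ) x + t.indicator 1 x := by
  by_cases hs : x ∈ s <;> by_cases ht : x ∈ t <;> simp_all

lemma mul_indicator_add_mul_indicator_mul_self {s t : Set β} (hst : Disjoint s t)
    (a b c d : ℝ) (z : β) :
    (a * s.indicator 1 z + b * t.indicator 1 z) * (c * s.indicator 1 z + d * t.indicator 1 z)
      = a * c * s.indicator 1 z + b * d * t.indicator 1 z := by
  by_cases hs : z ∈ s
  · simp [hs, hst.notMem_of_mem_left hs]
  · by_cases ht : z ∈ t <;> simp [hs, ht]

noncomputable def mixtureKernel (V : ℝ) (B₁ B₂ : Set α) (b₁ b₂ : Set β) (x : α) (z : β) : ℝ :=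
  V⁻¹ * ((B₁ ×ˢ b₁).indicator 1 (x, z) + (B₂ ×ˢ b₂).indicator 1 (x, z))

lemma mixtureKernel_eq (V : ℝ) (B₁ B₂ : Set α) (b₁ b₂ : Set β) (x : α) (z : β) :
    mixtureKernel V B₁ B₂ b₁ b₂ x z
      = V⁻¹ * B₁.indicator 1 x * b₁.indicator 1 z + V⁻¹ * B₂.indicator 1 x * b₂.indicator 1 z := by
  rw [mixtureKernel, indicator_prod_one, indicator_prod_one]
  ring

variable [MeasurableSpace β] {μ : Measure β}

lemma setIntegral_mul_indicator_add_mul_indicator {s t u : Set β}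
    (hs : MeasurableSet s) (ht : MeasurableSet t) (hsμ : μ s ≠ ∞) (htμ : μ t ≠ ∞)
    (hsu : s ⊆ u) (htu : t ⊆ u) (a b : ℝ) :
    ∫ z in u, (a * s.indicator 1 z + b * t.indicator 1 z) ∂μ = a * μ.real s + b * μ.real t := by
  have hs_int : Integrable (s.indicator (1 : β → ℝ)) (μ.restrict u) :=
    (integrable_indicator_iff hs).2 <|
      integrableOn_const ((Measure.restrict_apply_le _ _).trans_lt hsμ.lt_top).ne
  have ht_int : Integrable (t.indicator (1 : β → ℝ)) (μ.restrict u) :=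
    (integrable_indicator_iff ht).2 <|
      integrableOn_const ((Measure.restrict_apply_le _ _).trans_lt htμ.lt_top).ne
  rw [integral_add (hs_int.const_mul a) (ht_int.const_mul b), integral_const_mul,
    integral_const_mul, integral_indicator_one hs, integral_indicator_one ht,
    measureReal_restrict_apply hs, measureReal_restrict_apply ht,
    inter_eq_self_of_subset_left hsu, inter_eq_self_of_subset_left htu]

lemma setIntegral_mixtureKernel_mul_mixtureKernel {b₁ b₂ u : Set β} (hb : Disjoint b₁ b₂)
    (hb₁ : MeasurableSet b₁) (hb₂ : MeasurableSet b₂) (hb₁μ : μ b₁ ≠ ∞) (hb₂μ : μ b₂ ≠ ∞)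
    (hb₁u : b₁ ⊆ u) (hb₂u : b₂ ⊆ u) (V c : ℝ) (B₁ B₂ : Set α) (x x' : α) :
    ∫ z in u, mixtureKernel V B₁ B₂ b₁ b₂ x z * mixtureKernel V B₁ B₂ b₁ b₂ x' z * c ∂μ
      = c * V⁻¹ ^ 2 * (B₁.indicator 1 x * B₁.indicator 1 x' * μ.real b₁
          + B₂.indicator 1 x * B₂.indicator 1 x' * μ.real b₂) := by
  simp_rw [mixtureKernel_eq, mul_indicator_add_mul_indicator_mul_self hb, add_mul,
    mul_right_comm _ (b₁.indicator 1 _) c, mul_right_comm _ (b₂.indicator 1 _) c]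
  rw [setIntegral_mul_indicator_add_mul_indicator hb₁ hb₂ hb₁μ hb₂μ hb₁u hb₂u]
  ring

end MixtureKernel

section TwoBalls

variable {α E : Type*} [NormedAddCommGroup E] [NormedSpace ℝ E] [FiniteDimensional ℝ E]
  [MeasurableSpace E] [BorelSpace E] {μ : Measure E} [μ.IsAddHaarMeasure]

lemma setIntegral_mul_indicator_ball_add_mul_indicator_ball (v₁ v₂ : E) (ρ a b : ℝ) :
    ∫ z in Metric.ball v₁ ρ ∪ Metric.ball v₂ ρ,
        (a * (Metric.ball v₁ ρ).indicator 1 z + b * (Metric.ball v₂ ρ).indicator 1 z) ∂μ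
      = (a + b) * μ.real (Metric.ball v₁ ρ) := by
  rw [setIntegral_mul_indicator_add_mul_indicator measurableSet_ball measurableSet_ball
    measure_ball_lt_top.ne measure_ball_lt_top.ne subset_union_left subset_union_right,
    Measure.addHaar_real_ball_center μ v₂, ← Measure.addHaar_real_ball_center μ v₁]
  ring

lemma setIntegral_mixtureKernel_mul_mixtureKernel_balls {v₁ v₂ : E} {r : ℝ} (hr : 0 < r)
    (hdist : 2 * r ≤ dist v₁ v₂) (V : ℝ) (B₁ B₂ : Set α) (x x' : α) :
    ∫ z in Metric.ball v₁ r ∪ Metric.ball v₂ r,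
        mixtureKernel V B₁ B₂ (Metric.ball v₁ r) (Metric.ball v₂ r) x z *
          mixtureKernel V B₁ B₂ (Metric.ball v₁ r) (Metric.ball v₂ r) x' z *
          (2 * μ.real (Metric.ball v₁ r))⁻¹ ∂μ
      = (2 * V ^ 2)⁻¹ *
          (B₁.indicator 1 x * B₁.indicator 1 x' + B₂.indicator 1 x * B₂.indicator 1 x') := by
  have hball : 0 < μ.real (Metric.ball v₁ r) :=
    ENNReal.toReal_pos (Metric.measure_ball_pos μ v₁ hr).ne' measure_ball_lt_top.ne
  rw [setIntegral_mixtureKernel_mul_mixtureKernel (Metric.ball_disjoint_ball (by linarith))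
    measurableSet_ball measurableSet_ball measure_ball_lt_top.ne measure_ball_lt_top.ne
    subset_union_left subset_union_right, Measure.addHaar_real_ball_center μ v₂,
    ← Measure.addHaar_real_ball_center μ v₁]
  field_simp

end TwoBalls

lemma inv_two_mul_sq_mul_div (V a b c d : ℝ) (hV : V ≠ 0) :
    (2 * V ^ 2)⁻¹ * (a * c + b * d) / ((2 * V)⁻¹ * (a + b) * ((2 * V)⁻¹ * (c + d)))
      = 2 * (a * c + b * d) / ((a + b) * (c + d)) := by
  have h : (2 * V ^ 2)⁻¹ = (2 * V)⁻¹ ^ 2 * 2 := by field_simp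
  rw [h, show (2 * V)⁻¹ * (a + b) * ((2 * V)⁻¹ * (c + d)) = (2 * V)⁻¹ ^ 2 * ((a + b) * (c + d))
    by ring, mul_assoc, mul_div_mul_left _ _ (by positivity)]

theorem similarity_two_overlapping_balls_general
    {p : ℕ} (r : ℝ) (hr : 0 < r)
    (v₁ v₂ : EuclideanSpace ℝ (Fin p)) (hdist : dist v₁ v₂ = 3 * r)
    (lam : ℝ) :
    let B1 : Set (EuclideanSpace ℝ (Fin p)) := Metric.ball v₁ (2 * r)
    let B2 : Set (EuclideanSpace ℝ (Fin p)) := Metric.ball v₂ (2 * r)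
    let Xb : Set (EuclideanSpace ℝ (Fin p)) := Metric.ball v₁ r ∪ Metric.ball v₂ r
    let Xs : Set (EuclideanSpace ℝ (Fin p)) := B1 ∪ B2
    let volB : ℝ := (volume B1).toReal
    let ν : Measure (EuclideanSpace ℝ (Fin p)) := volume.restrict Xs
    let a : EuclideanSpace ℝ (Fin p) → EuclideanSpace ℝ (Fin p) → ℝ := fun x xb =>
      volB⁻¹ * (Set.indicator (B1 ×ˢ Metric.ball v₁ r) (fun _ => (1 : ℝ)) (x, xb)
        + Set.indicator (B2 ×ˢ Metric.ball v₂ r) (fun _ => (1 : ℝ)) (x, xb))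
    let pXb : ℝ := (2 * (volume (Metric.ball v₁ r)).toReal)⁻¹
    let w : EuclideanSpace ℝ (Fin p) → EuclideanSpace ℝ (Fin p) → ℝ := fun x x' =>
      ∫ xb in Xb, a x xb * a x' xb * pXb ∂volume
    let wm : EuclideanSpace ℝ (Fin p) → ℝ := fun x => ∫ x', w x x' ∂ν
    let sim : EuclideanSpace ℝ (Fin p) → EuclideanSpace ℝ (Fin p) → ℝ := fun x x' =>
      w x x' / (wm x * wm x') - lam
    -- positivity and explicit values of the marginal density
    (∀ x ∈ Xs, 0 < wm x) ∧
    (∀ x, x ∈ B1 \ B2 ∨ x ∈ B2 \ B1 → wm x = (2 * volB)⁻¹) ∧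
    (∀ x ∈ B1 ∩ B2, wm x = volB⁻¹) ∧
    -- the case analysis for the similarity function
    (∀ x x', (x ∈ B1 \ B2 ∧ x' ∈ B1 \ B2) ∨ (x ∈ B2 \ B1 ∧ x' ∈ B2 \ B1) →
      sim x x' = 2 - lam) ∧
    (∀ x x', (x ∈ B1 \ B2 ∧ x' ∈ B2 \ B1) ∨ (x ∈ B2 \ B1 ∧ x' ∈ B1 \ B2) →
      sim x x' = -lam) ∧
    (∀ x ∈ Xs, ∀ x' ∈ Xs, (x ∈ B1 ∩ B2 ∨ x' ∈ B1 ∩ B2) →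
      sim x x' = 1 - lam) := by
  intro B1 B2 Xb Xs volB ν a pXb w wm sim
  have hvolB : 0 < volB :=
    ENNReal.toReal_pos (Metric.measure_ball_pos _ _ (by positivity)).ne' measure_ball_lt_top.ne
  have hw (x x' : EuclideanSpace ℝ (Fin p)) : w x x' = (2 * volB ^ 2)⁻¹ *
      (B1.indicator 1 x * B1.indicator 1 x' + B2.indicator 1 x * B2.indicator 1 x') :=
    setIntegral_mixtureKernel_mul_mixtureKernel_balls hr (by linarith) volB B1 B2 x x'
  have hwm (x : EuclideanSpace ℝ (Fin p)) :
      wm x = (2 * volB)⁻¹ * (B1.indicator 1 x + B2.indicator 1 x) := by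
    change ∫ x', w x x' ∂volume.restrict Xs = _
    simp_rw [hw, mul_add, ← mul_assoc]
    rw [setIntegral_mul_indicator_ball_add_mul_indicator_ball]
    change _ * volB = _
    field_simp
  have hsim (x x' : EuclideanSpace ℝ (Fin p)) : sim x x' =
      2 * (B1.indicator 1 x * B1.indicator 1 x' + B2.indicator 1 x * B2.indicator 1 x') /
        ((B1.indicator 1 x + B2.indicator 1 x) * (B1.indicator 1 x' + B2.indicator 1 x')) - lam := by
    change w x x' / (wm x * wm x') - lam = _
    rw [hw, hwm, hwm, inv_two_mul_sq_mul_div _ _ _ _ _ hvolB.ne']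
  refine ⟨fun x hx => ?_, ?_, ?_, ?_, ?_, ?_⟩
  · rw [hwm]
    have := indicator_one_add_indicator_one_pos hx
    positivity
  · rintro x (⟨hx₁, hx₂⟩ | ⟨hx₂, hx₁⟩) <;> simp [hwm, hx₁, hx₂]
  · rintro x ⟨hx₁, hx₂⟩
    rw [hwm]
    simp only [indicator_of_mem hx₁, indicator_of_mem hx₂, Pi.one_apply]
    ring
  · rintro x x' (⟨⟨hx₁, hx₂⟩, hx₁', hx₂'⟩ | ⟨⟨hx₂, hx₁⟩, hx₂', hx₁'⟩) <;>
      simp [hsim, hx₁, hx₂, hx₁', hx₂']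
  · rintro x x' (⟨⟨hx₁, hx₂⟩, hx₂', hx₁'⟩ | ⟨⟨hx₂, hx₁⟩, hx₁', hx₂'⟩) <;>
      simp [hsim, hx₁, hx₂, hx₁', hx₂']
  · intro x hx x' hx' hboth
    have hden := mul_pos (indicator_one_add_indicator_one_pos hx)
      (indicator_one_add_indicator_one_pos hx')
    rw [hsim, sub_left_inj, div_eq_one_iff_eq hden.ne']
    rcases hboth with ⟨h₁, h₂⟩ | ⟨h₁, h₂⟩ <;>
      simp only [indicator_of_mem h₁, indicator_of_mem h₂, Pi.one_apply] <;> ring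

/-- **Similarity function for two overlapping balls (Appendix B, overlapping example).**
Let `r > 0` and `v₁, v₂ ∈ ℝ^p` with `‖v₁ − v₂‖ = 3r`; let `X̄ := B(v₁;r) ∪ B(v₂;r)` and
`X := B(v₁;2r) ∪ B(v₂;2r)`, with `ν` Lebesgue measure restricted to `X`.  With
`a(x|x̄) := vol(B(v₁;2r))⁻¹ Σᵢ 1_{B(vᵢ;2r)×B(vᵢ;r)}(x,x̄)`, `p_X̄ := (2·vol(B(v₁;r)))⁻¹`,
`w(x,x') := ∫_{X̄} a(x|x̄)a(x'|x̄)p_X̄ dx̄` and `w(x) := ∫_X w(x,x') dν(x')`, one has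
`w(x) > 0` on `X` (with the stated explicit values), and `sim(x,x';λ)` equals `2 − λ` on each
exclusive region squared, `−λ` across the two exclusive regions, and `1 − λ` in all
remaining cases. -/
theorem similarity_two_overlapping_balls
    {p : ℕ} (r : ℝ) (hr : 0 < r)
    (v₁ v₂ : EuclideanSpace ℝ (Fin p)) (hdist : dist v₁ v₂ = 3 * r)
    (lam : ℝ) (hlam : 0 ≤ lam) :
    let B1 : Set (EuclideanSpace ℝ (Fin p)) := Metric.ball v₁ (2 * r)
    let B2 : Set (EuclideanSpace ℝ (Fin p)) := Metric.ball v₂ (2 * r)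
    let Xb : Set (EuclideanSpace ℝ (Fin p)) := Metric.ball v₁ r ∪ Metric.ball v₂ r
    let Xs : Set (EuclideanSpace ℝ (Fin p)) := B1 ∪ B2
    let volB : ℝ := (volume B1).toReal
    let ν : Measure (EuclideanSpace ℝ (Fin p)) := volume.restrict Xs
    let a : EuclideanSpace ℝ (Fin p) → EuclideanSpace ℝ (Fin p) → ℝ := fun x xb =>
      volB⁻¹ * (Set.indicator (B1 ×ˢ Metric.ball v₁ r) (fun _ => (1 : ℝ)) (x, xb)
        + Set.indicator (B2 ×ˢ Metric.ball v₂ r) (fun _ => (1 : ℝ)) (x, xb))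
    let pXb : ℝ := (2 * (volume (Metric.ball v₁ r)).toReal)⁻¹
    let w : EuclideanSpace ℝ (Fin p) → EuclideanSpace ℝ (Fin p) → ℝ := fun x x' =>
      ∫ xb in Xb, a x xb * a x' xb * pXb ∂volume
    let wm : EuclideanSpace ℝ (Fin p) → ℝ := fun x => ∫ x', w x x' ∂ν
    let sim : EuclideanSpace ℝ (Fin p) → EuclideanSpace ℝ (Fin p) → ℝ := fun x x' =>
      w x x' / (wm x * wm x') - lam
    -- positivity and explicit values of the marginal density
    (∀ x ∈ Xs, 0 < wm x) ∧
    (∀ x, x ∈ B1 \ B2 ∨ x ∈ B2 \ B1 → wm x = (2 * volB)⁻¹) ∧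
    (∀ x ∈ B1 ∩ B2, wm x = volB⁻¹) ∧
    -- the case analysis for the similarity function
    (∀ x x', (x ∈ B1 \ B2 ∧ x' ∈ B1 \ B2) ∨ (x ∈ B2 \ B1 ∧ x' ∈ B2 \ B1) →
      sim x x' = 2 - lam) ∧
    (∀ x x', (x ∈ B1 \ B2 ∧ x' ∈ B2 \ B1) ∨ (x ∈ B2 \ B1 ∧ x' ∈ B1 \ B2) →
      sim x x' = -lam) ∧
    (∀ x ∈ Xs, ∀ x' ∈ Xs, (x ∈ B1 ∩ B2 ∨ x' ∈ B1 ∩ B2) →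
      sim x x' = 1 - lam) :=
  similarity_two_overlapping_balls_general r hr v₁ v₂ hdist lam
end

section
/- Trace identity connecting the normalized-cut operator and the kernel contrastive loss (Proposition H.2): Let (e_j)_{j∈J} be a Hilbert basis of E (J countable). Then for every measurable encoder f : X → S^{d−1}, the series Σ_{j∈J} [ ∫∫ ⟨h(f(x)), e_j⟩_E · ⟨h(f(x')), e_j⟩_E · ( w(x,x') − λ·w(x)w(x') ) dν(x)dν(x') ] converges, and its sum equals ∫∫ k(f(x),f(x')) w(x,x') dν(x)dν(x') − λ·∫∫ k(f(x),f(x')) w(x)w(x') dν(x)dν(x'), i.e. it equals −L_KCL(f;λ). (In operator language: −Tr(H†AH) = L_KCL(f;λ), where H : E → L²(X,P_X) is φ ↦ ⟨h(f(·)),φ⟩_E and A is the integral operator with kernel sim(x,x';λ) against the density w.) -/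
/-!
By Parseval, `⟪h (f x), h (f x')⟫ = ∑ⱼ ⟪h (f x), e j⟫ ⟪h (f x'), e j⟫` for all `x, x'`, and
the `j`-th summand is bounded in absolute value by `(⟪h (f x), e j⟫² + ⟪h (f x'), e j⟫²) / 2`,
whose sum over `j` is at most `C²` when `h` is bounded by `C`. Since the signed density `w(x,x') − λ w(x) w(x')` is
integrable on `X × X`, dominated convergence exchanges the sum over `j` with the integral, and
Fubini turns both sides into the iterated integrals of the statement.
-/

open MeasureTheory
open scoped RealInnerProductSpace ENNReal

noncomputable section

namespace KCLStatement16

variable {X : Type*} [MeasurableSpace X]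

def marg (ν : Measure X) (w : X → X → ℝ) (x : X) : ℝ := ∫ x', w x x' ∂ν

theorem _root_.abs_mul_le_add_sq_div_two (a b : ℝ) : |a * b| ≤ (a ^ 2 + b ^ 2) / 2 := by
  have := two_mul_le_add_sq |a| |b|
  rw [sq_abs, sq_abs] at this
  rw [abs_mul]
  linarith

section

variable {ι α E : Type*} [MeasurableSpace α] {μ : Measure α}
  [NormedAddCommGroup E] [InnerProductSpace ℝ E] (b : HilbertBasis ι ℝ E)

theorem _root_.MeasureTheory.Integrable.bdd_inner_mul {u v : α → E} {m : α → ℝ} {C D : ℝ}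
    (hm : Integrable m μ) (hu : AEStronglyMeasurable u μ) (hv : AEStronglyMeasurable v μ)
    (hu_bdd : ∀ᵐ a ∂μ, ‖u a‖ ≤ C) (hv_bdd : ∀ᵐ a ∂μ, ‖v a‖ ≤ D) :
    Integrable (fun a => ⟪u a, v a⟫ * m a) μ := by
  refine hm.bdd_mul (c := C * D) (hu.inner hv) ?_
  filter_upwards [hu_bdd, hv_bdd] with a hua hva
  exact (norm_inner_le_norm _ _).trans
    (mul_le_mul hua hva (norm_nonneg _) ((norm_nonneg _).trans hua))

theorem _root_.HilbertBasis.hasSum_real_inner_mul_inner (x y : E) :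
    HasSum (fun i => ⟪x, b i⟫ * ⟪y, b i⟫) ⟪x, y⟫ := by
  simpa only [real_inner_comm (b _) y] using b.hasSum_inner_mul_inner x y

theorem _root_.HilbertBasis.hasSum_inner_sq (x : E) :
    HasSum (fun i => ⟪x, b i⟫ ^ 2) (‖x‖ ^ 2) := by
  simpa only [sq, real_inner_self_eq_norm_mul_norm] using b.hasSum_real_inner_mul_inner x x

theorem _root_.HilbertBasis.norm_inner_le_norm (x : E) (i : ι) : ‖⟪x, b i⟫‖ ≤ ‖x‖ :=
  (_root_.norm_inner_le_norm _ _).trans_eq (by rw [b.orthonormal.1 i, mul_one])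

theorem _root_.HilbertBasis.integrable_inner_mul_inner_mul {u v : α → E} {m : α → ℝ} {C D : ℝ}
    (i : ι) (hm : Integrable m μ) (hu : AEStronglyMeasurable u μ) (hv : AEStronglyMeasurable v μ)
    (hu_bdd : ∀ᵐ a ∂μ, ‖u a‖ ≤ C) (hv_bdd : ∀ᵐ a ∂μ, ‖v a‖ ≤ D) :
    Integrable (fun a => ⟪u a, b i⟫ * ⟪v a, b i⟫ * m a) μ := by
  refine hm.bdd_mul (c := C * D) (hu.inner_const.mul hv.inner_const) ?_
  filter_upwards [hu_bdd, hv_bdd] with a hua hva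
  rw [norm_mul]
  exact mul_le_mul ((b.norm_inner_le_norm _ i).trans hua) ((b.norm_inner_le_norm _ i).trans hva)
    (norm_nonneg _) ((norm_nonneg _).trans hua)

variable [Countable ι]

theorem _root_.HilbertBasis.hasSum_integral_inner_mul_inner_mul {u v : α → E} {m : α → ℝ}
    {C : ℝ} (hu : AEStronglyMeasurable u μ) (hv : AEStronglyMeasurable v μ)
    (hu_bdd : ∀ᵐ a ∂μ, ‖u a‖ ≤ C) (hv_bdd : ∀ᵐ a ∂μ, ‖v a‖ ≤ C) (hm : Integrable m μ) :
    HasSum (fun i => ∫ a, ⟪u a, b i⟫ * ⟪v a, b i⟫ * m a ∂μ) (∫ a, ⟪u a, v a⟫ * m a ∂μ) := by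
  have hbound (a : α) : HasSum (fun i => (⟪u a, b i⟫ ^ 2 + ⟪v a, b i⟫ ^ 2) / 2 * ‖m a‖)
      ((‖u a‖ ^ 2 + ‖v a‖ ^ 2) / 2 * ‖m a‖) :=
    (((b.hasSum_inner_sq (u a)).add (b.hasSum_inner_sq (v a))).div_const 2).mul_right _
  refine hasSum_integral_of_dominated_convergence _
    (fun i => (hu.inner_const.mul hv.inner_const).mul hm.1) (fun i => ?_)
    (ae_of_all _ fun a => (hbound a).summable) ?_
    (ae_of_all _ fun a => (b.hasSum_real_inner_mul_inner (u a) (v a)).mul_right (m a))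
  · refine ae_of_all _ fun a => ?_
    rw [norm_mul, Real.norm_eq_abs (_ * _)]
    exact mul_le_mul_of_nonneg_right (abs_mul_le_add_sq_div_two _ _) (norm_nonneg _)
  · simp only [fun a => (hbound a).tsum_eq]
    refine hm.norm.bdd_mul (c := C ^ 2) (by fun_prop) ?_
    filter_upwards [hu_bdd, hv_bdd] with a hua hva
    have hC : 0 ≤ C := (norm_nonneg _).trans hua
    rw [Real.norm_of_nonneg (by positivity)]
    nlinarith [pow_le_pow_left₀ (norm_nonneg _) hua 2, pow_le_pow_left₀ (norm_nonneg _) hva 2]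

theorem _root_.HilbertBasis.hasSum_integral_integral_inner_mul_inner_mul [SigmaFinite μ]
    {β : Type*} [MeasurableSpace β] {ν : Measure β} [SigmaFinite ν]
    {u : α → E} {v : β → E} {m : α → β → ℝ} {C : ℝ}
    (hu : AEStronglyMeasurable u μ) (hv : AEStronglyMeasurable v ν)
    (hu_bdd : ∀ᵐ x ∂μ, ‖u x‖ ≤ C) (hv_bdd : ∀ᵐ y ∂ν, ‖v y‖ ≤ C)
    (hm : Integrable (Function.uncurry m) (μ.prod ν)) :
    HasSum (fun i => ∫ x, ∫ y, ⟪u x, b i⟫ * ⟪v y, b i⟫ * m x y ∂ν ∂μ)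
      (∫ x, ∫ y, ⟪u x, v y⟫ * m x y ∂ν ∂μ) := by
  have hu' := hu.comp_fst (ν := ν)
  have hv' := hv.comp_snd (μ := μ)
  have hu_bdd' : ∀ᵐ p ∂μ.prod ν, ‖u p.1‖ ≤ C := Measure.quasiMeasurePreserving_fst.ae hu_bdd
  have hv_bdd' : ∀ᵐ p ∂μ.prod ν, ‖v p.2‖ ≤ C := Measure.quasiMeasurePreserving_snd.ae hv_bdd
  simpa only [integral_prod _ (hm.bdd_inner_mul hu' hv' hu_bdd' hv_bdd'),
    integral_prod _ (b.integrable_inner_mul_inner_mul _ hm hu' hv' hu_bdd' hv_bdd'),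
    Function.uncurry_apply_pair]
    using b.hasSum_integral_inner_mul_inner_mul hu' hv' hu_bdd' hv_bdd' hm

end

theorem trace_identity_normalized_cut_kcl_general
    {X : Type*} [MeasurableSpace X]
    {E : Type*} [NormedAddCommGroup E] [InnerProductSpace ℝ E]
    {d : ℕ} (ν : Measure X) [SigmaFinite ν]
    (w : X → X → ℝ)
    (hwint : Integrable (fun p : X × X => w p.1 p.2) (ν.prod ν))
    (hmint : Integrable (marg ν w) ν)
    -- the continuous bounded feature map
    (h : EuclideanSpace ℝ (Fin d) → E) (hcont : Continuous h)
    (hbdd : ∃ C, ∀ z, ‖h z‖ ≤ C)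
    (lam : ℝ)
    -- a countable Hilbert basis of `E`
    {J : Type*} [Countable J] (e : HilbertBasis J ℝ E)
    -- the encoder
    (f : X → EuclideanSpace ℝ (Fin d)) (hf : Measurable f) :
    HasSum
      (fun j : J => ∫ x, ∫ x', (⟪h (f x), e j⟫ : ℝ) * (⟪h (f x'), e j⟫ : ℝ) *
        (w x x' - lam * (marg ν w x * marg ν w x')) ∂ν ∂ν)
      ((∫ x, ∫ x', (⟪h (f x), h (f x')⟫ : ℝ) * w x x' ∂ν ∂ν)
        - lam * ∫ x, ∫ x', (⟪h (f x), h (f x')⟫ : ℝ) * (marg ν w x * marg ν w x') ∂ν ∂ν) := by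
  obtain ⟨C, hC⟩ := hbdd
  have hg : AEStronglyMeasurable (fun x => h (f x)) ν :=
    (hcont.comp_stronglyMeasurable hf.stronglyMeasurable).aestronglyMeasurable
  have hg_bdd : ∀ᵐ x ∂ν, ‖h (f x)‖ ≤ C := ae_of_all _ fun x => hC (f x)
  have hg₁ := hg.comp_fst (ν := ν)
  have hg₂ := hg.comp_snd (μ := ν)
  have hg_bdd₁ : ∀ᵐ p ∂ν.prod ν, ‖h (f p.1)‖ ≤ C := ae_of_all _ fun p => hC (f p.1)
  have hg_bdd₂ : ∀ᵐ p ∂ν.prod ν, ‖h (f p.2)‖ ≤ C := ae_of_all _ fun p => hC (f p.2)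
  have hmarg : Integrable (fun p : X × X => marg ν w p.1 * marg ν w p.2) (ν.prod ν) :=
    hmint.mul_prod hmint
  convert e.hasSum_integral_integral_inner_mul_inner_mul hg hg hg_bdd hg_bdd
    (m := fun x x' => w x x' - lam * (marg ν w x * marg ν w x'))
    (hwint.sub (hmarg.const_mul lam)) using 1
  simp only [mul_sub, mul_left_comm _ lam]
  rw [integral_integral_sub (hwint.bdd_inner_mul hg₁ hg₂ hg_bdd₁ hg_bdd₂)
    ((hmarg.bdd_inner_mul hg₁ hg₂ hg_bdd₁ hg_bdd₂).const_mul lam)]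
  simp only [integral_const_mul]

/-- **Trace identity connecting the normalized-cut operator and the kernel contrastive loss
(Proposition H.2).**  Let `(e_j)_{j∈J}` be a Hilbert basis of `E` (`J` countable).  Then for
every measurable encoder `f : X → S^{d−1}`, the series
`Σ_j ∫∫ ⟪h(f x), e_j⟫ ⟪h(f x'), e_j⟫ (w(x,x') − λ w(x)w(x'))` converges, and its sum equals
`∫∫ k(f x, f x') w(x,x') − λ ∫∫ k(f x, f x') w(x)w(x')`, i.e. it equals `−L_KCL(f;λ)`. -/
theorem trace_identity_normalized_cut_kcl
    {X : Type*} [MeasurableSpace X]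
    {E : Type*} [NormedAddCommGroup E] [InnerProductSpace ℝ E] [CompleteSpace E]
    {d : ℕ} (ν : Measure X) [SigmaFinite ν]
    (w : X → X → ℝ)
    (hwmeas : Measurable (Function.uncurry w))
    (hwnn : ∀ x x', 0 ≤ w x x')
    (hwint : Integrable (fun p : X × X => w p.1 p.2) (ν.prod ν))
    (hwone : ∫ p, w p.1 p.2 ∂(ν.prod ν) = 1)
    (hmint : Integrable (marg ν w) ν)
    (hmpos : ∀ x, 0 < marg ν w x)
    -- the continuous bounded feature map
    (h : EuclideanSpace ℝ (Fin d) → E) (hcont : Continuous h)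
    (hbdd : ∃ C, ∀ z, ‖h z‖ ≤ C)
    (lam : ℝ) (hlam : 0 ≤ lam)
    -- a countable Hilbert basis of `E`
    {J : Type*} [Countable J] (e : HilbertBasis J ℝ E)
    -- the encoder
    (f : X → EuclideanSpace ℝ (Fin d)) (hf : Measurable f) (hfs : ∀ x, ‖f x‖ = 1) :
    HasSum
      (fun j : J => ∫ x, ∫ x', (⟪h (f x), e j⟫ : ℝ) * (⟪h (f x'), e j⟫ : ℝ) *
        (w x x' - lam * (marg ν w x * marg ν w x')) ∂ν ∂ν)
      ((∫ x, ∫ x', (⟪h (f x), h (f x')⟫ : ℝ) * w x x' ∂ν ∂ν)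
        - lam * ∫ x, ∫ x', (⟪h (f x), h (f x')⟫ : ℝ) * (marg ν w x * marg ν w x') ∂ν ∂ν) :=
  trace_identity_normalized_cut_kcl_general ν w hwint hmint h hcont hbdd lam e f hf

end KCLStatement16
end
end

section
/- Lower bound on the inner-cluster connectivity (Proposition G.3): Suppose Assumption 2(A,B) holds for δ, K, M_1,…,M_K with δ + λ ≥ 0, and suppose there exists c > 0 such that c·P_+(M_i × M_i) ≤ P_X(M_i)² for every i ∈ {1,…,K}, with P_+(M_i×M_i) > 0 and P_X(M_i) > 0. Then for every measurable f : X → S^{d−1}, every ω ∈ ℝ^d, and g(x) := ω⊤f(x), and every i: (1/P_+(M_i×M_i))·∫_{M_i×M_i} (g(x) − g(x'))² w(x,x') dν(x)dν(x') ≥ c(δ+λ) · (1/P_X(M_i)²)·∫_{M_i×M_i} (g(x) − g(x'))² w(x)w(x') dν(x)dν(x'); that is, Q_{M_i}(g) ≥ c(δ+λ). -/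
/-! On `Mᵢ × Mᵢ` the similarity bound reads `w(x,x') ≥ (δ+λ) w(x) w(x')`, so integrating the
bounded nonnegative weight `(g(x) − g(x'))²` against both densities compares the two numerators
up to the factor `δ+λ`; the hypothesis on `c` compares the normalisers `P₊(Mᵢ×Mᵢ)` and
`P_X(Mᵢ)²`. -/

open MeasureTheory
open scoped RealInnerProductSpace ENNReal

noncomputable section

namespace KCLStatement18

variable {X : Type*} [MeasurableSpace X]

/-- The marginal density `w(x) := ∫ w(x,x') dν(x')`. -/
def marg (ν : Measure X) (w : X → X → ℝ) (x : X) : ℝ := ∫ x', w x x' ∂ν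

/-- The similarity function `sim(x,x';λ) := w(x,x')/(w(x)w(x')) − λ`. -/
def simFun (ν : Measure X) (w : X → X → ℝ) (lam : ℝ) (x x' : X) : ℝ :=
  w x x' / (marg ν w x * marg ν w x') - lam

lemma mul_inv_le_inv_of_mul_le {a b c : ℝ} (ha : 0 ≤ a) (hb : 0 < b) (h : c * b ≤ a) :
    c * a⁻¹ ≤ b⁻¹ := by
  rcases ha.eq_or_lt with rfl | ha
  · simpa using hb.le
  · rw [← div_eq_mul_inv, div_le_iff₀ ha, inv_mul_eq_div, le_div_iff₀ hb]
    exact h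

lemma sq_inner_sub_inner_le {E : Type*} [NormedAddCommGroup E] [InnerProductSpace ℝ E]
    (ω y y' : E) (hy : ‖y‖ ≤ 1) (hy' : ‖y'‖ ≤ 1) :
    (⟪ω, y⟫ - ⟪ω, y'⟫) ^ 2 ≤ (2 * ‖ω‖) ^ 2 := by
  have hdiff : |⟪ω, y⟫ - ⟪ω, y'⟫| ≤ 2 * ‖ω‖ :=
    calc |⟪ω, y⟫ - ⟪ω, y'⟫| = |⟪ω, y - y'⟫| := by rw [inner_sub_right]
      _ ≤ ‖ω‖ * ‖y - y'‖ := abs_real_inner_le_norm _ _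
      _ ≤ ‖ω‖ * 2 := by gcongr; linarith [norm_sub_le y y']
      _ = 2 * ‖ω‖ := mul_comm _ _
  simpa only [sq_abs] using pow_le_pow_left₀ (abs_nonneg _) hdiff 2

lemma const_mul_integral_mul_le_integral_mul {α : Type*} [MeasurableSpace α] {μ : Measure α}
    {g u v : α → ℝ} {k : ℝ} (hgu : Integrable (fun a => g a * u a) μ)
    (hgv : Integrable (fun a => g a * v a) μ) (hg : ∀ᵐ a ∂μ, 0 ≤ g a)
    (huv : ∀ᵐ a ∂μ, k * u a ≤ v a) :
    k * ∫ a, g a * u a ∂μ ≤ ∫ a, g a * v a ∂μ := by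
  rw [← integral_const_mul]
  refine integral_mono_ae (hgu.const_mul k) hgv ?_
  filter_upwards [hg, huv] with a hga hkuv
  calc k * (g a * u a) = g a * (k * u a) := by ring
    _ ≤ g a * v a := mul_le_mul_of_nonneg_left hkuv hga

lemma mul_marg_le_of_le_simFun {ν : Measure X} {w : X → X → ℝ} {lam δ : ℝ} {x x' : X}
    (hx : 0 < marg ν w x) (hx' : 0 < marg ν w x') (h : δ ≤ simFun ν w lam x x') :
    (δ + lam) * (marg ν w x * marg ν w x') ≤ w x x' := by
  rw [← le_div_iff₀ (mul_pos hx hx')]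
  unfold simFun at h
  linarith

theorem inner_cluster_connectivity_lower_bound_general
    {X : Type*} [MeasurableSpace X] {d : ℕ}
    (ν : Measure X) [SigmaFinite ν]
    (w : X → X → ℝ)
    (hwint : Integrable (fun p : X × X => w p.1 p.2) (ν.prod ν))
    (hmint : Integrable (marg ν w) ν)
    (hmpos : ∀ x, 0 < marg ν w x)
    (lam : ℝ)
    -- Assumption 2(A,B)
    (K : ℕ) (δ : ℝ) (M : Fin K → Set X)
    (hMmeas : ∀ i, MeasurableSet (M i))
    (hsim : ∀ i : Fin K, ∀ x ∈ M i, ∀ x' ∈ M i, δ ≤ simFun ν w lam x x')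
    (hdl : 0 ≤ δ + lam)
    -- the constant `c`
    (c : ℝ)
    (hPpos : ∀ i : Fin K, 0 < ∫ p in M i ×ˢ M i, w p.1 p.2 ∂(ν.prod ν))
    (hcP : ∀ i : Fin K, c * ∫ p in M i ×ˢ M i, w p.1 p.2 ∂(ν.prod ν) ≤
      (∫ x in M i, marg ν w x ∂ν) ^ 2)
    -- the encoder and the linear head
    (f : X → EuclideanSpace ℝ (Fin d)) (hf : Measurable f) (hfs : ∀ x, ‖f x‖ = 1)
    (ω : EuclideanSpace ℝ (Fin d)) :
    ∀ i : Fin K,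
      c * (δ + lam) * ((∫ x in M i, marg ν w x ∂ν) ^ 2)⁻¹ *
          ∫ x in M i, ∫ x' in M i,
            ((⟪ω, f x⟫ : ℝ) - (⟪ω, f x'⟫ : ℝ)) ^ 2 * (marg ν w x * marg ν w x') ∂ν ∂ν ≤
        (∫ p in M i ×ˢ M i, w p.1 p.2 ∂(ν.prod ν))⁻¹ *
          ∫ x in M i, ∫ x' in M i,
            ((⟪ω, f x⟫ : ℝ) - (⟪ω, f x'⟫ : ℝ)) ^ 2 * w x x' ∂ν ∂ν := by
  intro i
  set s := M i ×ˢ M i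
  set B : X × X → ℝ := fun p => (⟪ω, f p.1⟫ - ⟪ω, f p.2⟫) ^ 2
  have hs : MeasurableSet s := (hMmeas i).prod (hMmeas i)
  have hBmeas : AEStronglyMeasurable B ((ν.prod ν).restrict s) := by fun_prop
  have hBbdd : ∀ᵐ p ∂(ν.prod ν).restrict s, ‖B p‖ ≤ (2 * ‖ω‖) ^ 2 :=
    .of_forall fun p => by
      rw [Real.norm_of_nonneg (sq_nonneg _)]
      exact sq_inner_sub_inner_le ω _ _ (hfs p.1).le (hfs p.2).le
  have hBw : IntegrableOn (fun p => B p * w p.1 p.2) s (ν.prod ν) :=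
    hwint.restrict.bdd_mul hBmeas hBbdd
  have hBm : IntegrableOn (fun p => B p * (marg ν w p.1 * marg ν w p.2)) s (ν.prod ν) :=
    (hmint.mul_prod hmint).restrict.bdd_mul hBmeas hBbdd
  have hnumer := const_mul_integral_mul_le_integral_mul hBm hBw (.of_forall fun p => sq_nonneg _)
    (ae_restrict_of_forall_mem hs fun p hp =>
      mul_marg_le_of_le_simFun (hmpos _) (hmpos _) (hsim i p.1 hp.1 p.2 hp.2))
  rw [← setIntegral_prod _ hBw, ← setIntegral_prod _ hBm]
  have hnormalizer := mul_inv_le_inv_of_mul_le (sq_nonneg _) (hPpos i) (hcP i)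
  have hBm_nonneg : 0 ≤ ∫ p in s, B p * (marg ν w p.1 * marg ν w p.2) ∂(ν.prod ν) :=
    integral_nonneg fun p => mul_nonneg (sq_nonneg _) (mul_pos (hmpos _) (hmpos _)).le
  calc _ = (c * ((∫ x in M i, marg ν w x ∂ν) ^ 2)⁻¹) *
        ((δ + lam) * ∫ p in s, B p * (marg ν w p.1 * marg ν w p.2) ∂(ν.prod ν)) := by ring
    _ ≤ _ := mul_le_mul hnormalizer hnumer (mul_nonneg hdl hBm_nonneg) (inv_nonneg.2 (hPpos i).le)

/-- **Lower bound on the inner-cluster connectivity (Proposition G.3).**  Under Assumption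
2(A,B) with `δ + λ ≥ 0`, if `c > 0` satisfies `c·P₊(Mᵢ×Mᵢ) ≤ P_X(Mᵢ)²` for every `i`, then
for every measurable `f : X → S^{d−1}`, every `ω ∈ ℝ^d` and `g := ω⊤f(·)`, and every `i`,
`(1/P₊(Mᵢ×Mᵢ))·∫_{Mᵢ×Mᵢ} (g(x)−g(x'))² w(x,x')
  ≥ c(δ+λ)·(1/P_X(Mᵢ)²)·∫_{Mᵢ×Mᵢ} (g(x)−g(x'))² w(x)w(x')`, i.e. `Q_{Mᵢ}(g) ≥ c(δ+λ)`. -/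
theorem inner_cluster_connectivity_lower_bound
    {X : Type*} [MeasurableSpace X] {d : ℕ}
    (ν : Measure X) [SigmaFinite ν]
    (w : X → X → ℝ)
    (hwmeas : Measurable (Function.uncurry w))
    (hwnn : ∀ x x', 0 ≤ w x x')
    (hwint : Integrable (fun p : X × X => w p.1 p.2) (ν.prod ν))
    (hwone : ∫ p, w p.1 p.2 ∂(ν.prod ν) = 1)
    (hmint : Integrable (marg ν w) ν)
    (hmpos : ∀ x, 0 < marg ν w x)
    (lam : ℝ) (hlam : 0 ≤ lam)
    -- Assumption 2(A,B)
    (K : ℕ) (δ : ℝ) (M : Fin K → Set X)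
    (hMmeas : ∀ i, MeasurableSet (M i))
    (hcover : (⋃ i, M i) = Set.univ)
    (hsim : ∀ i : Fin K, ∀ x ∈ M i, ∀ x' ∈ M i, δ ≤ simFun ν w lam x x')
    (hdl : 0 ≤ δ + lam)
    -- the constant `c`
    (c : ℝ) (hc : 0 < c)
    (hPpos : ∀ i : Fin K, 0 < ∫ p in M i ×ˢ M i, w p.1 p.2 ∂(ν.prod ν))
    (hPXpos : ∀ i : Fin K, 0 < ∫ x in M i, marg ν w x ∂ν)
    (hcP : ∀ i : Fin K, c * ∫ p in M i ×ˢ M i, w p.1 p.2 ∂(ν.prod ν) ≤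
      (∫ x in M i, marg ν w x ∂ν) ^ 2)
    -- the encoder and the linear head
    (f : X → EuclideanSpace ℝ (Fin d)) (hf : Measurable f) (hfs : ∀ x, ‖f x‖ = 1)
    (ω : EuclideanSpace ℝ (Fin d)) :
    ∀ i : Fin K,
      c * (δ + lam) * ((∫ x in M i, marg ν w x ∂ν) ^ 2)⁻¹ *
          ∫ x in M i, ∫ x' in M i,
            ((⟪ω, f x⟫ : ℝ) - (⟪ω, f x'⟫ : ℝ)) ^ 2 * (marg ν w x * marg ν w x') ∂ν ∂ν ≤
        (∫ p in M i ×ˢ M i, w p.1 p.2 ∂(ν.prod ν))⁻¹ *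
          ∫ x in M i, ∫ x' in M i,
            ((⟪ω, f x⟫ : ℝ) - (⟪ω, f x'⟫ : ℝ)) ^ 2 * w x x' ∂ν ∂ν :=
  inner_cluster_connectivity_lower_bound_general ν w hwint hmint hmpos lam K δ M hMmeas hsim hdl c
    hPpos hcP f hf hfs ω

end KCLStatement18
end
end
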